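/- arXiv:1612.07854 — 12 statements merged into one kernel-verified Lean document; each statement's English description precedes it below -/
import Mathlib

section
/- The solution of the SPI problem is unique up to a nonzero scalar: if Λ'(x) and Λ''(x) are both nonzero polynomials of minimal degree satisfying deg(b⁽ⁱ⁾(x)·Λ(x) mod m⁽ⁱ⁾(x)) < τ⁽ⁱ⁾ for all i, then Λ''(x) = c·Λ'(x) for some nonzero c ∈ F. -/
open Polynomial

/-- The solution of the SPI problem is unique up to a nonzero scalar. -/
theorem spi_unique_up_to_scalar {F : Type*} [Field F] {L : ℕ}
    (b m : Fin L → F[X]) (τ : Fin L → ℕ)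
    (hm : ∀ i, 1 ≤ (m i).degree)
    (hb : ∀ i, (b i).degree < (m i).degree)
    (hτ : ∀ i, (τ i : WithBot ℕ) ≤ (m i).degree)
    (Λ' Λ'' : F[X]) (hΛ'0 : Λ' ≠ 0) (hΛ''0 : Λ'' ≠ 0)
    (hΛ's : ∀ i, (b i * Λ' % m i).degree < (τ i : WithBot ℕ))
    (hΛ''s : ∀ i, (b i * Λ'' % m i).degree < (τ i : WithBot ℕ))
    (hΛ'min : ∀ g : F[X], g ≠ 0 →
      (∀ i, (b i * g % m i).degree < (τ i : WithBot ℕ)) → Λ'.degree ≤ g.degree)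
    (hΛ''min : ∀ g : F[X], g ≠ 0 →
      (∀ i, (b i * g % m i).degree < (τ i : WithBot ℕ)) → Λ''.degree ≤ g.degree) :
    ∃ c : F, c ≠ 0 ∧ Λ'' = c • Λ' := by
  set c : F := Λ''.leadingCoeff / Λ'.leadingCoeff with hc
  have hc0 : c ≠ 0 := div_ne_zero (leadingCoeff_ne_zero.2 hΛ''0) (leadingCoeff_ne_zero.2 hΛ'0)
  refine ⟨c, hc0, ?_⟩
  have hdeg : Λ''.degree = Λ'.degree :=
    le_antisymm (hΛ''min Λ' hΛ'0 hΛ's) (hΛ'min Λ'' hΛ''0 hΛ''s)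
  set g : F[X] := Λ'' - c • Λ' with hg
  by_contra hne
  have hgne : g ≠ 0 := sub_ne_zero.2 hne
  have hgdeg : g.degree < Λ''.degree := by
    apply degree_sub_lt
    · rw [smul_eq_C_mul, degree_mul, degree_C hc0, zero_add, hdeg]
    · exact hΛ''0
    · rw [smul_eq_C_mul, leadingCoeff_mul, leadingCoeff_C, hc,
        div_mul_cancel₀ _ (leadingCoeff_ne_zero.2 hΛ'0)]
  have hgs : ∀ i, (b i * g % m i).degree < (τ i : WithBot ℕ) := by
    intro i
    have hmod : b i * g % m i = b i * Λ'' % m i - c • (b i * Λ' % m i) := by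
      rw [hg, mul_sub, mul_smul_comm]
      rw [mod_def, mod_def, mod_def, sub_modByMonic, smul_modByMonic]
    rw [hmod]
    calc (b i * Λ'' % m i - c • (b i * Λ' % m i)).degree
        ≤ max (b i * Λ'' % m i).degree (c • (b i * Λ' % m i)).degree := degree_sub_le _ _
      _ < (τ i : WithBot ℕ) := by
          apply max_lt (hΛ''s i)
          calc (c • (b i * Λ' % m i)).degree ≤ (b i * Λ' % m i).degree := degree_smul_le _ _
            _ < _ := hΛ's i
  exact absurd (hΛ''min g hgne hgs) (not_le.2 hgdeg)
end

section
/- Degree bound for the SPI problem: if Λ(x) is a nonzero polynomial of minimal degree satisfying deg(b⁽ⁱ⁾(x)·Λ(x) mod m⁽ⁱ⁾(x)) < τ⁽ⁱ⁾ for all i ∈ {1,…,L}, then deg Λ(x) ≤ Σᵢ₌₁ᴸ (deg m⁽ⁱ⁾(x) − τ⁽ⁱ⁾). -/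
open Polynomial

/-- Degree bound for the solution of the SPI problem:
`deg Λ ≤ ∑ i (deg m⁽ⁱ⁾ − τ⁽ⁱ⁾)`. -/
theorem spi_degree_bound {F : Type*} [Field F] {L : ℕ}
    (b m : Fin L → F[X]) (τ : Fin L → ℕ)
    (hm : ∀ i, 1 ≤ (m i).degree)
    (hb : ∀ i, (b i).degree < (m i).degree)
    (hτ : ∀ i, (τ i : WithBot ℕ) ≤ (m i).degree)
    (Λ : F[X]) (hΛ0 : Λ ≠ 0)
    (hΛs : ∀ i, (b i * Λ % m i).degree < (τ i : WithBot ℕ))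
    (hΛmin : ∀ g : F[X], g ≠ 0 →
      (∀ i, (b i * g % m i).degree < (τ i : WithBot ℕ)) → Λ.degree ≤ g.degree) :
    Λ.natDegree ≤ ∑ i, ((m i).natDegree - τ i) := by
  classical
  set D : ℕ := ∑ i, ((m i).natDegree - τ i) with hD
  have hm0 : ∀ i, m i ≠ 0 := by
    intro i h
    simpa [h] using hm i
  -- the linear map recording the "high" coefficients of b i * p % m i
  set φ : F[X] →ₗ[F] (Π i : Fin L, Fin ((m i).natDegree - τ i) → F) :=
    LinearMap.pi fun i => LinearMap.pi fun k =>
      (Polynomial.lcoeff F (τ i + k)) ∘ₗ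
        (Polynomial.modByMonicHom (m i * C (m i).leadingCoeff⁻¹)) ∘ₗ
        (LinearMap.mulLeft F (b i)) with hφ
  have hφ_apply : ∀ (p : F[X]) i (k : Fin ((m i).natDegree - τ i)),
      φ p i k = (b i * p % m i).coeff (τ i + k) := by
    intro p i k
    simp [hφ, Polynomial.modByMonicHom, Polynomial.mod_def]
  set ψ : Polynomial.degreeLT F (D + 1) →ₗ[F] (Π i : Fin L, Fin ((m i).natDegree - τ i) → F) :=
    φ ∘ₗ (Polynomial.degreeLT F (D + 1)).subtype with hψ
  -- dimension count: ψ is not injective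
  have hdim : ¬ Function.Injective ψ := by
    intro hinj
    have h1 := LinearMap.finrank_le_finrank_of_injective hinj
    have h2 : Module.finrank F (Polynomial.degreeLT F (D + 1)) = D + 1 := by
      rw [(Polynomial.degreeLTEquiv F (D + 1)).finrank_eq]
      simp
    have h3 : Module.finrank F (Π i : Fin L, Fin ((m i).natDegree - τ i) → F) = D := by
      rw [Module.finrank_pi_fintype]
      simp [hD]
    omega
  rw [Function.not_injective_iff] at hdim
  obtain ⟨x, y, hxy, hne⟩ := hdim
  set g : F[X] := (x : F[X]) - (y : F[X]) with hg
  have hg0 : g ≠ 0 := by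
    intro h
    apply hne
    apply Subtype.ext
    have := sub_eq_zero.mp h
    exact this
  have hgmem : g ∈ Polynomial.degreeLT F (D + 1) := sub_mem x.2 y.2
  have hφg : φ g = 0 := by
    have : ψ x = ψ y := hxy
    simp only [hψ, LinearMap.comp_apply, Submodule.subtype_apply] at this
    rw [hg, map_sub, this, sub_self]
  -- g satisfies the SPI conditions
  have hgs : ∀ i, (b i * g % m i).degree < (τ i : WithBot ℕ) := by
    intro i
    rw [Polynomial.degree_lt_iff_coeff_zero]
    intro n hn
    rcases lt_or_ge n (m i).natDegree with h | h
    · -- τ i ≤ n < natDegree m i : from kernel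
      have hτn : τ i ≤ n := by exact_mod_cast hn
      have hk : n - τ i < (m i).natDegree - τ i := by omega
      have : φ g i ⟨n - τ i, hk⟩ = 0 := by rw [hφg]; rfl
      rw [hφ_apply] at this
      simpa [Nat.add_sub_cancel' hτn] using this
    · -- n ≥ natDegree m i : degree of mod is < degree m
      apply Polynomial.coeff_eq_zero_of_degree_lt
      calc (b i * g % m i).degree < (m i).degree := EuclideanDomain.mod_lt _ (hm0 i)
        _ ≤ (n : WithBot ℕ) := by
            rw [Polynomial.degree_eq_natDegree (hm0 i)]
            exact_mod_cast h
  -- conclude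
  have hΛg := hΛmin g hg0 hgs
  have hgdeg : g.degree < ((D + 1 : ℕ) : WithBot ℕ) := (Polynomial.mem_degreeLT).mp hgmem
  have : Λ.degree < ((D + 1 : ℕ) : WithBot ℕ) := lt_of_le_of_lt hΛg hgdeg
  have := (Polynomial.natDegree_lt_iff_degree_lt hΛ0).mpr this
  omega
end

section
/- There exists a nonzero polynomial Λ(x) with deg Λ(x) ≤ Σᵢ₌₁ᴸ (deg m⁽ⁱ⁾(x) − τ⁽ⁱ⁾) satisfying deg(b⁽ⁱ⁾(x)·Λ(x) mod m⁽ⁱ⁾(x)) < τ⁽ⁱ⁾ simultaneously for i = 1,…,L. (Proved by a linear-algebra dimension count: the constraints define L linear maps from F^{ν+1} to F^{νᵢ} with νᵢ = deg m⁽ⁱ⁾ − τ⁽ⁱ⁾ and ν = Σνᵢ, whose kernels have a nontrivial common intersection.) -/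
/-!
Requiring `deg (b⁽ⁱ⁾ Λ mod m⁽ⁱ⁾) < τ⁽ⁱ⁾` means that the coefficients of `b⁽ⁱ⁾ Λ mod m⁽ⁱ⁾` in degrees
`τ⁽ⁱ⁾, …, deg m⁽ⁱ⁾ - 1` vanish: `deg m⁽ⁱ⁾ - τ⁽ⁱ⁾` linear conditions on `Λ`. Altogether these are
`ν = ∑ (deg m⁽ⁱ⁾ - τ⁽ⁱ⁾)` linear conditions on the `(ν + 1)`-dimensional space of polynomials of
degree at most `ν`, so some nonzero `Λ` in that space satisfies all of them.
-/

open Polynomial Module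

namespace Polynomial

section Semiring

variable {R : Type*} [Semiring R]

theorem degree_lt_of_coeff_eq_zero_of_degree_lt {p : R[X]} {a n : ℕ} (hp : p.degree < n)
    (h : ∀ j, a ≤ j → j < n → p.coeff j = 0) : p.degree < a := by
  rw [degree_lt_iff_coeff_zero]
  intro j hj
  by_cases hjn : j < n
  · exact h j (by exact_mod_cast hj) hjn
  · exact coeff_eq_zero_of_degree_lt (hp.trans_le (by exact_mod_cast not_lt.mp hjn))

end Semiring

variable {F : Type*} [Field F]

theorem exists_ne_zero_natDegree_le_map_eq_zero {V : Type*} [AddCommGroup V] [Module F V]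
    [FiniteDimensional F V] (f : F[X] →ₗ[F] V) {n : ℕ} (hV : finrank F V ≤ n) :
    ∃ p : F[X], p ≠ 0 ∧ p.natDegree ≤ n ∧ f p = 0 := by
  have : FiniteDimensional F (degreeLT F (n + 1)) :=
    (degreeLTEquiv F (n + 1)).symm.finiteDimensional
  have hrank : finrank F V < finrank F (degreeLT F (n + 1)) := by
    rw [(degreeLTEquiv F (n + 1)).finrank_eq, finrank_fin_fun]
    omega
  obtain ⟨⟨p, hp_mem⟩, hp_ker, hp_ne⟩ :=
    Submodule.exists_mem_ne_zero_of_ne_bot (LinearMap.ker_ne_bot_of_finrank_lt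
      (f := f ∘ₗ (degreeLT F (n + 1)).subtype) hrank)
  have hp : p ≠ 0 := fun h => hp_ne (Subtype.ext h)
  refine ⟨p, hp, ?_, hp_ker⟩
  have := (natDegree_lt_iff_degree_lt hp).mpr (mem_degreeLT.mp hp_mem)
  omega

noncomputable def modHom (q : F[X]) : F[X] →ₗ[F] F[X] :=
  modByMonicHom (q * C q.leadingCoeff⁻¹)

@[simp]
theorem modHom_apply (p q : F[X]) : modHom q p = p % q :=
  rfl

noncomputable def highCoeffsMulMod (b m : F[X]) (τ : ℕ) : F[X] →ₗ[F] (Fin (m.natDegree - τ) → F) :=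
  LinearMap.pi fun k => lcoeff F (τ + k) ∘ₗ modHom m ∘ₗ LinearMap.mulLeft F b

theorem degree_mul_mod_lt_of_highCoeffsMulMod_eq_zero {b m p : F[X]} {τ : ℕ} (hm : m ≠ 0)
    (hp : highCoeffsMulMod b m τ p = 0) : (b * p % m).degree < τ := by
  refine degree_lt_of_coeff_eq_zero_of_degree_lt (n := m.natDegree)
    (degree_eq_natDegree hm ▸ degree_mod_lt _ hm) fun j hτj hj => ?_
  have := congrFun hp ⟨j - τ, by omega⟩
  simpa [highCoeffsMulMod, Nat.add_sub_cancel' hτj] using this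

end Polynomial

theorem spi_exists_with_degree_bound_general {F : Type*} [Field F] {L : ℕ}
    (b m : Fin L → F[X]) (τ : Fin L → ℕ)
    (hm : ∀ i, 1 ≤ (m i).degree) :
    ∃ Λ : F[X], Λ ≠ 0 ∧ Λ.natDegree ≤ ∑ i, ((m i).natDegree - τ i) ∧
      ∀ i, (b i * Λ % m i).degree < (τ i : WithBot ℕ) := by
  have hm0 : ∀ i, m i ≠ 0 := fun i h => by simpa [h] using hm i
  obtain ⟨Λ, hΛ, hdeg, hker⟩ := exists_ne_zero_natDegree_le_map_eq_zero
    (LinearMap.pi fun i => highCoeffsMulMod (b i) (m i) (τ i))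
    (n := ∑ i, ((m i).natDegree - τ i)) (by simp [finrank_pi_fintype])
  exact ⟨Λ, hΛ, hdeg, fun i =>
    degree_mul_mod_lt_of_highCoeffsMulMod_eq_zero (hm0 i) (congrFun hker i)⟩

/-- There exists a nonzero polynomial `Λ` with
`deg Λ ≤ ∑ i (deg m⁽ⁱ⁾ − τ⁽ⁱ⁾)` satisfying the SPI conditions simultaneously. -/
theorem spi_exists_with_degree_bound {F : Type*} [Field F] {L : ℕ}
    (b m : Fin L → F[X]) (τ : Fin L → ℕ)
    (hm : ∀ i, 1 ≤ (m i).degree)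
    (hb : ∀ i, (b i).degree < (m i).degree)
    (hτ : ∀ i, (τ i : WithBot ℕ) ≤ (m i).degree)
    (hτlt : ∃ i, (τ i : WithBot ℕ) < (m i).degree) :
    ∃ Λ : F[X], Λ ≠ 0 ∧ Λ.natDegree ≤ ∑ i, ((m i).natDegree - τ i) ∧
      ∀ i, (b i * Λ % m i).degree < (τ i : WithBot ℕ) :=
  spi_exists_with_degree_bound_general b m τ hm
end

section
/- Irrelevant coefficients: let Λ(x) be the minimal-degree nonzero solution of the SPI problem and let u ≥ deg Λ(x). Then the SPI solution is unchanged if any coefficient b_ℓ⁽ⁱ⁾ of b⁽ⁱ⁾(x) with ℓ < τ⁽ⁱ⁾ − u is changed, and likewise if any coefficient m_s⁽ⁱ⁾ of m⁽ⁱ⁾(x) with s ≤ τ⁽ⁱ⁾ − u is changed (keeping degrees and leading coefficients fixed). Equivalently: whether a polynomial Λ with deg Λ ≤ u satisfies deg(b⁽ⁱ⁾ Λ mod m⁽ⁱ⁾) < τ⁽ⁱ⁾ depends only on the coefficients b_ℓ⁽ⁱ⁾ with ℓ ≥ τ⁽ⁱ⁾ − u and m_s⁽ⁱ⁾ with s >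 τ⁽ⁱ⁾ − u. -/
/-!
Write `b Λ = m q + r` and `b' Λ = m' q' + r'`. Since `deg b' < deg m'` and `deg Λ ≤ u`, the
quotient satisfies `deg q' < u`. The coefficients of `b - b'` vanish from index `τ - u` on and
those of `m - m'` above index `τ - u`, so `d = (b - b') Λ - (m - m') q'` has degree `< τ`.
Now `r - r' - d = m (q' - q)` has degree `< deg m`, hence vanishes: `r - r' = d`, so `r` and `r'`
agree in all coefficients from `τ` on.
-/

open Polynomial

namespace Polynomial

theorem degree_mul_lt_of_coeff_eq_zero {R : Type*} [Semiring R] {p q : R[X]} {k j : ℕ}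
    (hq : q.degree < j) (hp : ∀ n, k < n + j → p.coeff n = 0) : (p * q).degree < k := by
  rcases eq_or_ne p 0 with rfl | hp0
  · simp
  rcases eq_or_ne q 0 with rfl | hq0
  · simp
  have hqj : q.natDegree < j := (natDegree_lt_iff_degree_lt hq0).2 hq
  have hpk : p.natDegree + j ≤ k := by
    by_contra! h
    exact leadingCoeff_ne_zero.2 hp0 (hp _ h)
  calc (p * q).degree ≤ (p * q).natDegree := degree_le_natDegree
    _ ≤ (p.natDegree + q.natDegree : ℕ) := by exact_mod_cast natDegree_mul_le
    _ < k := by exact_mod_cast (by omega)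

theorem degree_lt_iff_of_degree_sub_lt {R : Type*} [Ring R] {p q : R[X]} {n : ℕ}
    (h : (p - q).degree < n) : p.degree < n ↔ q.degree < n := by
  simp only [← mem_degreeLT] at h ⊢
  exact ⟨fun hp => (Submodule.sub_mem_iff_right _ hp).1 h,
    fun hq => (Submodule.sub_mem_iff_left _ hq).1 h⟩

variable {K : Type*} [Field K]

theorem degree_div_lt_of_degree_lt_add {p q : K[X]} {j : ℕ} (h : p.degree < q.degree + j) :
    (p / q).degree < j := by
  rcases eq_or_ne q 0 with rfl | hq0
  · simp
  by_cases hqp : q.degree ≤ p.degree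
  · rw [← degree_add_div hq0 hqp] at h
    exact lt_of_add_lt_add_left h
  · rw [(Polynomial.div_eq_zero_iff hq0).2 (not_le.1 hqp), degree_zero]
    exact WithBot.bot_lt_coe j

theorem degree_mul_div_lt {a b m : K[X]} {u : ℕ} (hb : b.degree < m.degree)
    (ha : a.degree ≤ u) : (b * a / m).degree < u :=
  degree_div_lt_of_degree_lt_add <|
    calc (b * a).degree ≤ b.degree + a.degree := degree_mul_le _ _
      _ ≤ b.degree + u := add_le_add_right ha _
      _ < m.degree + u := WithBot.add_lt_add_right (WithBot.coe_ne_bot) hb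

theorem degree_mul_mod_sub_mul_mod_lt {b m b' m' Λ : K[X]} {τ u : ℕ}
    (hτ : (τ : WithBot ℕ) ≤ m.degree) (hm' : m'.degree = m.degree)
    (hb' : b'.degree < m'.degree)
    (hbe : ∀ ℓ, τ ≤ ℓ + u → b.coeff ℓ = b'.coeff ℓ)
    (hme : ∀ s, τ < s + u → m.coeff s = m'.coeff s) (hΛu : Λ.degree ≤ u) :
    (b * Λ % m - b' * Λ % m').degree < τ := by
  have hm0 : m ≠ 0 := by
    rintro rfl
    simp at hτ
  have hm'0 : m' ≠ 0 := by
    rintro rfl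
    exact hm0 (degree_eq_bot.1 (by rw [← hm', degree_zero]))
  have hbΛ : ((b - b') * Λ).degree < τ :=
    degree_mul_lt_of_coeff_eq_zero (j := u + 1) (hΛu.trans_lt (by exact_mod_cast u.lt_succ_self))
      fun n hn => by rw [coeff_sub, hbe n (by omega), sub_self]
  have hmq' : ((m - m') * (b' * Λ / m')).degree < τ :=
    degree_mul_lt_of_coeff_eq_zero (degree_mul_div_lt hb' hΛu)
      fun n hn => by rw [coeff_sub, hme n hn, sub_self]
  set d := (b - b') * Λ - (m - m') * (b' * Λ / m')
  have hd : d.degree < τ := (degree_sub_le _ _).trans_lt (max_lt hbΛ hmq')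
  have hdvd : m ∣ b * Λ % m - b' * Λ % m' - d :=
    ⟨b' * Λ / m' - b * Λ / m, by
      linear_combination EuclideanDomain.div_add_mod (b * Λ) m -
        EuclideanDomain.div_add_mod (b' * Λ) m'⟩
  have hr : (b * Λ % m - b' * Λ % m').degree < m.degree :=
    (degree_sub_le _ _).trans_lt
      (max_lt (degree_mod_lt _ hm0) (hm' ▸ degree_mod_lt _ hm'0))
  have hrd : b * Λ % m - b' * Λ % m' - d = 0 :=
    eq_zero_of_dvd_of_degree_lt hdvd ((degree_sub_le _ _).trans_lt (max_lt hr (hd.trans_le hτ)))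
  rwa [sub_eq_zero.1 hrd]

end Polynomial

theorem spi_irrelevant_coefficients_general {F : Type*} [Field F] {L : ℕ}
    (b m b' m' : Fin L → F[X]) (τ : Fin L → ℕ) (u : ℕ)
    (hτ : ∀ i, (τ i : WithBot ℕ) ≤ (m i).degree)
    (hm' : ∀ i, (m' i).degree = (m i).degree)
    (hb' : ∀ i, (b' i).degree < (m' i).degree)
    (hbe : ∀ i ℓ, τ i ≤ ℓ + u → (b i).coeff ℓ = (b' i).coeff ℓ)
    (hme : ∀ i s, τ i < s + u → (m i).coeff s = (m' i).coeff s)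
    (Λ : F[X]) (hΛu : Λ.degree ≤ (u : WithBot ℕ)) :
    (∀ i, (b i * Λ % m i).degree < (τ i : WithBot ℕ)) ↔
      (∀ i, (b' i * Λ % m' i).degree < (τ i : WithBot ℕ)) :=
  forall_congr' fun i => degree_lt_iff_of_degree_sub_lt <|
    degree_mul_mod_sub_mul_mod_lt (hτ i) (hm' i) (hb' i) (hbe i) (hme i) hΛu

/-- Irrelevant coefficients: for polynomials `Λ` with `deg Λ ≤ u`, whether the SPI
conditions `deg(b⁽ⁱ⁾ Λ mod m⁽ⁱ⁾) < τ⁽ⁱ⁾` hold depends only on the coefficients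
`b⁽ⁱ⁾_ℓ` with `ℓ ≥ τ⁽ⁱ⁾ − u` and `m⁽ⁱ⁾_s` with `s > τ⁽ⁱ⁾ − u` (keeping the degrees of
the moduli fixed).  In particular the SPI solution is unchanged by altering the
other coefficients. -/
theorem spi_irrelevant_coefficients {F : Type*} [Field F] {L : ℕ}
    (b m b' m' : Fin L → F[X]) (τ : Fin L → ℕ) (u : ℕ)
    (hm : ∀ i, 1 ≤ (m i).degree)
    (hb : ∀ i, (b i).degree < (m i).degree)
    (hτ : ∀ i, (τ i : WithBot ℕ) ≤ (m i).degree)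
    (hm' : ∀ i, (m' i).degree = (m i).degree)
    (hb' : ∀ i, (b' i).degree < (m' i).degree)
    (hbe : ∀ i ℓ, τ i ≤ ℓ + u → (b i).coeff ℓ = (b' i).coeff ℓ)
    (hme : ∀ i s, τ i < s + u → (m i).coeff s = (m' i).coeff s)
    (Λ : F[X]) (hΛ0 : Λ ≠ 0) (hΛu : Λ.degree ≤ (u : WithBot ℕ)) :
    (∀ i, (b i * Λ % m i).degree < (τ i : WithBot ℕ)) ↔
      (∀ i, (b' i * Λ % m' i).degree < (τ i : WithBot ℕ)) :=
  spi_irrelevant_coefficients_general b m b' m' τ u hτ hm' hb' hbe hme Λ hΛu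
end

section
/- Degree reduction preserves the SPI problem: let u > 0 satisfy u ≥ deg Λ(x) where Λ(x) is the SPI solution; for each i set s⁽ⁱ⁾ = max{τ⁽ⁱ⁾ − u, 0}, and define b̃⁽ⁱ⁾(x) and m̃⁽ⁱ⁾(x) by shifting coefficients: b̃_ℓ⁽ⁱ⁾ = b_{ℓ+s⁽ⁱ⁾}⁽ⁱ⁾ and m̃_ℓ⁽ⁱ⁾ = m_{ℓ+s⁽ⁱ⁾}⁽ⁱ⁾. Then the SPI problem with data (b̃⁽ⁱ⁾, m̃⁽ⁱ⁾, τ⁽ⁱ⁾ − s⁽ⁱ⁾) has the same solution Λ(x) as the original problem, and moreover b⁽ⁱ⁾(x)Λ(x) div m⁽ⁱ⁾(x) = b̃⁽ⁱ⁾(x)Λ(x) div m̃⁽ⁱ⁾(x). -/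
/-!
Write `b = X^s b̃ + r_b` and `m = X^s m̃ + r_m` with `deg r_b, deg r_m < s`. For `deg g ≤ u` and
any `q` of degree `< u`,
`b g - m q = X^s (b̃ g - m̃ q) + (r_b g - r_m q)`, where the last term has degree `< u + s = τ`.
So `deg (b g - m q) < τ` iff `deg (b̃ g - m̃ q) < u`. Since `τ ≤ deg m` and `u ≤ deg m̃`, such a `q`
is on either side the quotient of the division, so the remainder conditions are equivalent and the
quotients agree. Both `Λ` and any competitor of smaller degree have degree `≤ u`, hence the two
SPI problems have the same solution. (If `τ ≤ u` then `s = 0` and nothing changes.)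
-/

open Polynomial

section Ring

variable {R : Type*} [Ring R]

theorem Polynomial.degree_mul_lt_add {p q : R[X]} {a : WithBot ℕ} {c : ℕ}
    (hp : p.degree < a) (hq : q.degree ≤ c) : (p * q).degree < a + c :=
  calc (p * q).degree ≤ p.degree + q.degree := degree_mul_le p q
    _ ≤ p.degree + c := by gcongr
    _ < a + c := WithBot.add_lt_add_right (WithBot.natCast_ne_bot c) hp

theorem Polynomial.degree_add_lt_iff_of_degree_lt {p e : R[X]} {n : WithBot ℕ}
    (he : e.degree < n) : (p + e).degree < n ↔ p.degree < n := by
  refine ⟨fun h => ?_, fun h => (degree_add_le p e).trans_lt (max_lt h he)⟩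
  simpa using (degree_sub_le (p + e) e).trans_lt (max_lt h he)

variable {p pt m mt : R[X]} {s : ℕ}

theorem Polynomial.degree_sub_mul_X_pow_lt_of_shift (hpt : ∀ ℓ, pt.coeff ℓ = p.coeff (ℓ + s)) :
    (p - pt * X ^ s).degree < (s : WithBot ℕ) := by
  refine (degree_lt_iff_coeff_zero _ _).mpr fun k hk => ?_
  obtain ⟨ℓ, rfl⟩ := Nat.exists_eq_add_of_le (show s ≤ k by exact_mod_cast hk)
  rw [coeff_sub, add_comm, coeff_mul_X_pow, hpt, sub_self]

theorem Polynomial.degree_mul_X_pow_eq_of_shift (hpt : ∀ ℓ, pt.coeff ℓ = p.coeff (ℓ + s))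
    (hs : (s : WithBot ℕ) ≤ p.degree) : (pt * X ^ s).degree = p.degree := by
  have hlt := (degree_sub_mul_X_pow_lt_of_shift hpt).trans_le hs
  simpa using degree_sub_eq_left_of_degree_lt hlt

theorem Polynomial.degree_mul_X_pow_lt_of_shift
    (hpt : ∀ ℓ, pt.coeff ℓ = p.coeff (ℓ + s)) (hs : (s : WithBot ℕ) ≤ m.degree)
    (hp : p.degree < m.degree) : (pt * X ^ s).degree < m.degree := by
  have hlt := (degree_sub_mul_X_pow_lt_of_shift hpt).trans_le hs
  simpa using (degree_sub_le p (p - pt * X ^ s)).trans_lt (max_lt hp hlt)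

theorem Polynomial.le_degree_of_shift [Nontrivial R] {n : ℕ}
    (hmt : ∀ ℓ, mt.coeff ℓ = m.coeff (ℓ + s)) (h : (n : WithBot ℕ) + s ≤ m.degree) :
    n ≤ mt.degree := by
  have hs : (s : WithBot ℕ) ≤ m.degree := le_trans (by exact_mod_cast Nat.le_add_left s n) h
  rw [← degree_mul_X_pow_eq_of_shift hmt hs, degree_mul_X_pow] at h
  exact (WithBot.add_le_add_iff_right (WithBot.natCast_ne_bot s)).mp h

theorem Polynomial.degree_lt_degree_of_shift [Nontrivial R]
    (hpt : ∀ ℓ, pt.coeff ℓ = p.coeff (ℓ + s)) (hmt : ∀ ℓ, mt.coeff ℓ = m.coeff (ℓ + s))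
    (hs : (s : WithBot ℕ) ≤ m.degree) (hp : p.degree < m.degree) : pt.degree < mt.degree := by
  have h := degree_mul_X_pow_lt_of_shift hpt hs hp
  rw [← degree_mul_X_pow_eq_of_shift hmt hs, degree_mul_X_pow, degree_mul_X_pow] at h
  exact (WithBot.add_lt_add_iff_right (WithBot.natCast_ne_bot s)).mp h

end Ring

section CommRing

variable {R : Type*} [CommRing R] [Nontrivial R] {b m bt mt g q : R[X]} {s u : ℕ}

theorem Polynomial.degree_mul_sub_mul_lt_iff_of_shift
    (hbt : ∀ ℓ, bt.coeff ℓ = b.coeff (ℓ + s)) (hmt : ∀ ℓ, mt.coeff ℓ = m.coeff (ℓ + s))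
    (hg : g.degree ≤ u) (hq : q.degree ≤ u) :
    (b * g - m * q).degree < (u : WithBot ℕ) + s ↔ (bt * g - mt * q).degree < u := by
  have hsplit : b * g - m * q =
      (bt * g - mt * q) * X ^ s + ((b - bt * X ^ s) * g - (m - mt * X ^ s) * q) := by ring
  have herr : ((b - bt * X ^ s) * g - (m - mt * X ^ s) * q).degree < (u : WithBot ℕ) + s := by
    rw [add_comm]
    exact (degree_sub_le _ _).trans_lt
      (max_lt (degree_mul_lt_add (degree_sub_mul_X_pow_lt_of_shift hbt) hg)
        (degree_mul_lt_add (degree_sub_mul_X_pow_lt_of_shift hmt) hq))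
  rw [hsplit, degree_add_lt_iff_of_degree_lt herr, degree_mul_X_pow,
    WithBot.add_lt_add_iff_right (WithBot.natCast_ne_bot s)]

end CommRing

section Field

variable {F : Type*} [Field F]

theorem Polynomial.div_eq_of_degree_sub_mul_lt {p m q : F[X]}
    (h : (p - m * q).degree < m.degree) : p / m = q := by
  have hm : m ≠ 0 := by rintro rfl; simp at h
  by_contra hne
  have hsub : m * (p / m - q) = (p - m * q) - p % m := by
    rw [EuclideanDomain.mod_eq_sub_mul_div]; ring
  have hlt : (m * (p / m - q)).degree < m.degree := by
    rw [hsub]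
    exact (degree_sub_le _ _).trans_lt (max_lt h (EuclideanDomain.mod_lt p hm))
  exact hlt.not_ge (degree_le_mul_left m (sub_ne_zero.mpr hne))

theorem Polynomial.degree_lt_of_degree_mul_sub_mul_lt {a m g q : F[X]} {u : ℕ}
    (ha : a.degree < m.degree) (hg : g.degree ≤ u) (h : (a * g - m * q).degree < m.degree) :
    q.degree < u := by
  have hm : m ≠ 0 := by rintro rfl; simp at ha
  have hmq : (m * q).degree < m.degree + u := by
    rw [show m * q = a * g - (a * g - m * q) by ring]
    exact (degree_sub_le _ _).trans_lt (max_lt (degree_mul_lt_add ha hg)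
      (h.trans_le (le_add_of_nonneg_right (by exact_mod_cast Nat.zero_le u))))
  rw [degree_mul] at hmq
  exact (WithBot.add_lt_add_iff_left (degree_ne_bot.mpr hm)).mp hmq

variable {b m bt mt g : F[X]} {s u : ℕ}

theorem Polynomial.degree_mod_lt_and_div_eq_of_shift
    (hbt : ∀ ℓ, bt.coeff ℓ = b.coeff (ℓ + s)) (hmt : ∀ ℓ, mt.coeff ℓ = m.coeff (ℓ + s))
    (hb : b.degree < m.degree) (hτ : (u : WithBot ℕ) + s ≤ m.degree) (hg : g.degree ≤ u)
    (h : (b * g % m).degree < u + s) :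
    (bt * g % mt).degree < u ∧ b * g / m = bt * g / mt := by
  set q := b * g / m
  have hr : b * g - m * q = b * g % m := (EuclideanDomain.mod_eq_sub_mul_div _ _).symm
  have hq : q.degree < u := degree_lt_of_degree_mul_sub_mul_lt hb hg (hr ▸ h.trans_le hτ)
  have hr' : (bt * g - mt * q).degree < u :=
    (degree_mul_sub_mul_lt_iff_of_shift hbt hmt hg hq.le).mp (hr ▸ h)
  have hdiv := div_eq_of_degree_sub_mul_lt (hr'.trans_le (le_degree_of_shift hmt hτ))
  refine ⟨?_, hdiv.symm⟩
  rwa [EuclideanDomain.mod_eq_sub_mul_div, hdiv]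

theorem Polynomial.degree_mod_lt_of_shift
    (hbt : ∀ ℓ, bt.coeff ℓ = b.coeff (ℓ + s)) (hmt : ∀ ℓ, mt.coeff ℓ = m.coeff (ℓ + s))
    (hb : b.degree < m.degree) (hτ : (u : WithBot ℕ) + s ≤ m.degree) (hg : g.degree ≤ u)
    (h : (bt * g % mt).degree < u) : (b * g % m).degree < u + s := by
  set q := bt * g / mt
  have hr : bt * g - mt * q = bt * g % mt := (EuclideanDomain.mod_eq_sub_mul_div _ _).symm
  have hbt' := degree_lt_degree_of_shift hbt hmt
    (le_trans (by exact_mod_cast Nat.le_add_left s u) hτ) hb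
  have hq : q.degree < u :=
    degree_lt_of_degree_mul_sub_mul_lt hbt' hg (hr ▸ h.trans_le (le_degree_of_shift hmt hτ))
  have hr' : (b * g - m * q).degree < u + s :=
    (degree_mul_sub_mul_lt_iff_of_shift hbt hmt hg hq.le).mpr (hr ▸ h)
  rwa [EuclideanDomain.mod_eq_sub_mul_div, div_eq_of_degree_sub_mul_lt (hr'.trans_le hτ)]

theorem Polynomial.degree_mod_lt_iff_and_div_eq_of_reduction {τ : ℕ}
    (hbt : ∀ ℓ, bt.coeff ℓ = b.coeff (ℓ + (τ - u))) (hmt : ∀ ℓ, mt.coeff ℓ = m.coeff (ℓ + (τ - u)))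
    (hb : b.degree < m.degree) (hτ : (τ : WithBot ℕ) ≤ m.degree) (hg : g.degree ≤ u) :
    ((b * g % m).degree < τ ↔ (bt * g % mt).degree < ((τ - (τ - u) : ℕ) : WithBot ℕ)) ∧
      ((b * g % m).degree < τ → b * g / m = bt * g / mt) := by
  rcases le_or_gt τ u with hτu | hτu
  · have hs : τ - u = 0 := Nat.sub_eq_zero_of_le hτu
    obtain rfl : bt = b := ext fun ℓ => by rw [hbt, hs, add_zero]
    obtain rfl : mt = m := ext fun ℓ => by rw [hmt, hs, add_zero]
    simp [hs]
  · obtain ⟨s, rfl⟩ := Nat.exists_eq_add_of_le hτu.le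
    simp only [Nat.add_sub_cancel_left, Nat.add_sub_cancel] at hbt hmt ⊢
    push_cast at hτ ⊢
    exact ⟨⟨fun h => (degree_mod_lt_and_div_eq_of_shift hbt hmt hb hτ hg h).1,
      degree_mod_lt_of_shift hbt hmt hb hτ hg⟩,
      fun h => (degree_mod_lt_and_div_eq_of_shift hbt hmt hb hτ hg h).2⟩

end Field

/-- `τ i - u` is `s⁽ⁱ⁾ = max{τ⁽ⁱ⁾ − u, 0}`, by truncated subtraction in `ℕ`. -/
theorem spi_degree_reduction_general {F : Type*} [Field F] {L : ℕ}
    (b m bt mt : Fin L → F[X]) (τ : Fin L → ℕ) (u : ℕ)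
    (hb : ∀ i, (b i).degree < (m i).degree)
    (hτ : ∀ i, (τ i : WithBot ℕ) ≤ (m i).degree)
    (Λ : F[X])
    (hΛs : ∀ i, (b i * Λ % m i).degree < (τ i : WithBot ℕ))
    (hΛmin : ∀ g : F[X], g ≠ 0 →
      (∀ i, (b i * g % m i).degree < (τ i : WithBot ℕ)) → Λ.degree ≤ g.degree)
    (hΛu : Λ.degree ≤ (u : WithBot ℕ))
    (hbt : ∀ i ℓ, (bt i).coeff ℓ = (b i).coeff (ℓ + (τ i - u)))
    (hmt : ∀ i ℓ, (mt i).coeff ℓ = (m i).coeff (ℓ + (τ i - u))) :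
    (∀ i, (bt i * Λ % mt i).degree < ((τ i - (τ i - u) : ℕ) : WithBot ℕ)) ∧
    (∀ g : F[X], g ≠ 0 →
      (∀ i, (bt i * g % mt i).degree < ((τ i - (τ i - u) : ℕ) : WithBot ℕ)) →
        Λ.degree ≤ g.degree) ∧
    (∀ i, b i * Λ / m i = bt i * Λ / mt i) := by
  have reduce i {g : F[X]} (hg : g.degree ≤ u) :=
    degree_mod_lt_iff_and_div_eq_of_reduction (hbt i) (hmt i) (hb i) (hτ i) hg
  refine ⟨fun i => (reduce i hΛu).1.mp (hΛs i), fun g hg0 hg => ?_,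
    fun i => (reduce i hΛu).2 (hΛs i)⟩
  by_contra! hlt
  exact hlt.not_ge (hΛmin g hg0 fun i => (reduce i (hlt.le.trans hΛu)).1.mpr (hg i))

/-- Degree reduction: stripping off the irrelevant low-order coefficients
(`s⁽ⁱ⁾ = max{τ⁽ⁱ⁾ − u, 0}` of them, which is `τ⁽ⁱ⁾ - u` in truncated ℕ-subtraction)
yields an SPI problem with the same solution `Λ`, and moreover the quotients of the
corresponding divisions agree. -/
theorem spi_degree_reduction {F : Type*} [Field F] {L : ℕ}
    (b m bt mt : Fin L → F[X]) (τ : Fin L → ℕ) (u : ℕ) (hu : 0 < u)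
    (hm : ∀ i, 1 ≤ (m i).degree)
    (hb : ∀ i, (b i).degree < (m i).degree)
    (hτ : ∀ i, (τ i : WithBot ℕ) ≤ (m i).degree)
    (Λ : F[X]) (hΛ0 : Λ ≠ 0)
    (hΛs : ∀ i, (b i * Λ % m i).degree < (τ i : WithBot ℕ))
    (hΛmin : ∀ g : F[X], g ≠ 0 →
      (∀ i, (b i * g % m i).degree < (τ i : WithBot ℕ)) → Λ.degree ≤ g.degree)
    (hΛu : Λ.degree ≤ (u : WithBot ℕ))
    (hbt : ∀ i ℓ, (bt i).coeff ℓ = (b i).coeff (ℓ + (τ i - u)))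
    (hmt : ∀ i ℓ, (mt i).coeff ℓ = (m i).coeff (ℓ + (τ i - u))) :
    (∀ i, (bt i * Λ % mt i).degree < ((τ i - (τ i - u) : ℕ) : WithBot ℕ)) ∧
    (∀ g : F[X], g ≠ 0 →
      (∀ i, (bt i * g % mt i).degree < ((τ i - (τ i - u) : ℕ) : WithBot ℕ)) →
        Λ.degree ≤ g.degree) ∧
    (∀ i, b i * Λ / m i = bt i * Λ / mt i) :=
  spi_degree_reduction_general b m bt mt τ u hb hτ Λ hΛs hΛmin hΛu hbt hmt
end

section
/- Monomialization of the SPI problem: let u satisfy u ≥ deg Λ(x) (Λ the SPI solution) and n⁽ⁱ⁾ − τ⁽ⁱ⁾ + u > 0 for all i, where n⁽ⁱ⁾ = deg m⁽ⁱ⁾(x). Define the reversed polynomials b̄⁽ⁱ⁾(x) = x^{n⁽ⁱ⁾−1} b⁽ⁱ⁾(1/x), m̄⁽ⁱ⁾(x) = x^{n⁽ⁱ⁾} m⁽ⁱ⁾(1/x), let w⁽ⁱ⁾(x) be the inverse of m̄⁽ⁱ⁾(x) mod x^{n⁽ⁱ⁾−τ⁽ⁱ⁾+u} in F[x]/x^{n⁽ⁱ⁾−τ⁽ⁱ⁾+u},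 s⁽ⁱ⁾(x) = w⁽ⁱ⁾(x)b̄⁽ⁱ⁾(x) mod x^{n⁽ⁱ⁾−τ⁽ⁱ⁾+u}, and b̃⁽ⁱ⁾(x) = x^{n⁽ⁱ⁾−τ⁽ⁱ⁾+u−1} s⁽ⁱ⁾(1/x). Then the SPI problem with data (b̃⁽ⁱ⁾(x), x^{n⁽ⁱ⁾−τ⁽ⁱ⁾+u}, u) has the same solution Λ(x) as the original SPI problem with data (b⁽ⁱ⁾(x), m⁽ⁱ⁾(x), τ⁽ⁱ⁾). -/
open Polynomial

private lemma degree_mod_X_pow_lt {F : Type*} [Field F] (p : F[X]) (N : ℕ) :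
    (p % X ^ N).degree < (N : WithBot ℕ) := by
  rw [Polynomial.mod_def]
  simp only [leadingCoeff_X_pow, inv_one, map_one, mul_one]
  have h := degree_modByMonic_lt p (monic_X_pow (R := F) N)
  rwa [degree_X_pow] at h

private lemma coeff_mod_X_pow {F : Type*} [Field F] (p : F[X]) {N k : ℕ} (hk : k < N) :
    (p % X ^ N).coeff k = p.coeff k := by
  conv_rhs => rw [← EuclideanDomain.div_add_mod p (X ^ N)]
  rw [coeff_add, mul_comm, coeff_mul_X_pow', if_neg (by omega), zero_add]

private lemma degree_mod_X_pow_lt_iff {F : Type*} [Field F] (p : F[X]) {N u : ℕ} :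
    (p % X ^ N).degree < (u : WithBot ℕ) ↔ ∀ k, u ≤ k → k < N → p.coeff k = 0 := by
  rw [degree_lt_iff_coeff_zero]
  constructor
  · intro h k hu hN
    rw [← coeff_mod_X_pow p hN]; exact h k hu
  · intro h k hu
    by_cases hN : k < N
    · rw [coeff_mod_X_pow p hN]; exact h k hu hN
    · exact coeff_eq_zero_of_degree_lt ((degree_mod_X_pow_lt p N).trans_le
        (by exact_mod_cast not_lt.mp hN))

private lemma reflect_reflect' {F : Type*} [Semiring F] (f : F[X]) (N : ℕ) :
    reflect N (reflect N f) = f := by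
  ext k; rw [coeff_reflect, coeff_reflect, revAt_invol]

private lemma natDegree_reflect_le' {F : Type*} [Semiring F] {f : F[X]} {N : ℕ}
    (hf : f.natDegree ≤ N) : (reflect N f).natDegree ≤ N := by
  refine natDegree_le_iff_coeff_eq_zero.mpr fun k hk => ?_
  rw [coeff_reflect, revAt_eq_self_of_lt hk]
  exact coeff_eq_zero_of_natDegree_lt (lt_of_le_of_lt hf hk)

private lemma reflect_shift {F : Type*} [Semiring F] (f : F[X]) {N : ℕ}
    (hf : f.natDegree ≤ N) (i : ℕ) :
    reflect (N + i) f = reflect N f * X ^ i := by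
  have h := reflect_mul f 1 hf (by simp : (1 : F[X]).natDegree ≤ i)
  rw [mul_one] at h
  rw [h, ← C_1, reflect_C, C_1, one_mul]

private lemma spi_key {F : Type*} [Field F] {b m : F[X]} {τ u : ℕ}
    (hm : 1 ≤ m.degree) (hb : b.degree < m.degree) (hτ : (τ : WithBot ℕ) ≤ m.degree)
    {w : F[X]}
    (hw : (Polynomial.reflect m.natDegree m * w) % X ^ (m.natDegree - τ + u) = 1)
    (hpos : 0 < m.natDegree - τ + u)
    {g : F[X]} (hg : g.degree ≤ (u : WithBot ℕ)) :
    ((Polynomial.reflect (m.natDegree - τ + u - 1)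
        ((w * Polynomial.reflect (m.natDegree - 1) b) % X ^ (m.natDegree - τ + u)) * g)
      % X ^ (m.natDegree - τ + u)).degree < (u : WithBot ℕ)
    ↔ (b * g % m).degree < (τ : WithBot ℕ) := by
  have hm0 : m ≠ 0 := fun h => by simp [h] at hm
  set n := m.natDegree with hn
  set N := n - τ + u with hN
  have hdm : m.degree = (n : WithBot ℕ) := degree_eq_natDegree hm0
  have hn1 : 1 ≤ n := by
    rw [hdm] at hm; exact_mod_cast hm
  have hτn : τ ≤ n := by
    rw [hdm] at hτ; exact_mod_cast hτ
  by_cases hg0 : g = 0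
  · subst hg0
    simp only [mul_zero, EuclideanDomain.zero_mod, degree_zero]
    exact ⟨fun _ => WithBot.bot_lt_coe _, fun _ => WithBot.bot_lt_coe _⟩
  by_cases hb0 : b = 0
  · subst hb0
    simp only [reflect_zero, mul_zero, zero_mul, EuclideanDomain.zero_mod, degree_zero]
    exact ⟨fun _ => WithBot.bot_lt_coe _, fun _ => WithBot.bot_lt_coe _⟩
  have hbn : b.natDegree ≤ n - 1 := by
    have := (natDegree_lt_iff_degree_lt hb0).mpr (hb.trans_le hdm.le)
    omega
  have hgn : g.natDegree ≤ u := natDegree_le_iff_degree_le.mpr hg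
  set r := b * g % m with hr
  set q := b * g / m with hq
  have hdvm : m * q + r = b * g := EuclideanDomain.div_add_mod (b * g) m
  have hrd : r.degree < (n : WithBot ℕ) := by
    rw [hr, Polynomial.mod_def, ← hdm]
    exact (degree_modByMonic_lt _ (monic_mul_leadingCoeff_inv hm0)).trans_eq
      (degree_mul_leadingCoeff_inv _ hm0)
  have hrn : r.natDegree ≤ n - 1 := by
    by_cases hr0 : r = 0
    · simp [hr0]
    · have := (natDegree_lt_iff_degree_lt hr0).mpr hrd; omega
  have hqc : q = 0 ∨ (1 ≤ u ∧ q.natDegree ≤ u - 1) := by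
    by_cases hq0 : q = 0
    · exact Or.inl hq0
    right
    have h1 : (m * q).natDegree = n + q.natDegree := natDegree_mul hm0 hq0
    have h2 : (m * q).natDegree ≤ n - 1 + u := by
      have hmq : m * q = b * g - r := by rw [← hdvm]; ring
      rw [hmq]
      have hbg : (b * g).natDegree ≤ n - 1 + u := natDegree_mul_le.trans (add_le_add hbn hgn)
      exact (natDegree_sub_le _ _).trans (max_le hbg (hrn.trans (by omega)))
    omega
  have hqbar : ∀ j, u ≤ j → (reflect (u - 1) q).coeff j = 0 := by
    intro j hj
    rcases hqc with h | ⟨hu1, hqn⟩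
    · simp [h]
    · exact coeff_eq_zero_of_natDegree_lt (lt_of_le_of_lt (natDegree_reflect_le' hqn) (by omega))
  have hreflmq : reflect (n - 1 + u) (m * q) = reflect n m * reflect (u - 1) q := by
    rcases hqc with h | ⟨hu1, hqn⟩
    · simp [h]
    · rw [show n - 1 + u = n + (u - 1) by omega]
      exact reflect_mul m q le_rfl hqn
  have E : reflect (n - 1) b * reflect u g
      = reflect n m * reflect (u - 1) q + reflect (n - 1) r * X ^ u := by
    rw [← reflect_mul b g hbn hgn, ← hdvm, reflect_add, hreflmq, reflect_shift r hrn u]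
  set s := (w * reflect (n - 1) b) % X ^ N with hsdef
  set t := (w * reflect (n - 1) b) / X ^ N with htdef
  have hs : X ^ N * t + s = w * reflect (n - 1) b := EuclideanDomain.div_add_mod _ _
  set t' := (reflect n m * w) / X ^ N with ht'def
  have ht' : X ^ N * t' + 1 = reflect n m * w := by
    conv_rhs => rw [← EuclideanDomain.div_add_mod (reflect n m * w) (X ^ N)]
    rw [hw]
  have hsdeg : s.natDegree ≤ N - 1 := by
    have hd := degree_mod_X_pow_lt (w * reflect (n - 1) b) N
    by_cases hs0 : s = 0
    · simp [hs0]
    · have := (natDegree_lt_iff_degree_lt hs0).mpr hd; omega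
  have hkey : s * reflect u g
      = reflect (u - 1) q + w * reflect (n - 1) r * X ^ u
        + X ^ N * (t' * reflect (u - 1) q - t * reflect u g) := by
    linear_combination (reflect u g) * hs + w * E - (reflect (u - 1) q) * ht'
  have hbtg : reflect (N - 1) s * g = reflect (N - 1 + u) (s * reflect u g) := by
    have h := reflect_mul (reflect (N - 1) s) g (natDegree_reflect_le' hsdeg) hgn
    rw [reflect_reflect'] at h
    rw [← h, reflect_reflect']
  rw [degree_mod_X_pow_lt_iff]
  have hco : ∀ j, u ≤ j → j < N →
      (s * reflect u g).coeff j = (w * reflect (n - 1) r).coeff (j - u) := by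
    intro j hj1 hj2
    have hz : (X ^ N * (t' * reflect (u - 1) q - t * reflect u g)).coeff j = 0 := by
      rw [mul_comm, coeff_mul_X_pow', if_neg (by omega)]
    rw [hkey, coeff_add, coeff_add, hqbar j hj1, zero_add, coeff_mul_X_pow', if_pos hj1,
      hz, add_zero]
  have step1 : (∀ k, u ≤ k → k < N → (reflect (N - 1) s * g).coeff k = 0)
      ↔ (∀ j, u ≤ j → j < N → (s * reflect u g).coeff j = 0) := by
    constructor
    · intro h j hj1 hj2
      have hk := h (N - 1 + u - j) (by omega) (by omega)
      rw [hbtg, coeff_reflect, revAt_le (by omega : N - 1 + u - j ≤ N - 1 + u)] at hk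
      rwa [show N - 1 + u - (N - 1 + u - j) = j by omega] at hk
    · intro h k hk1 hk2
      rw [hbtg, coeff_reflect, revAt_le (by omega : k ≤ N - 1 + u)]
      exact h _ (by omega) (by omega)
  have step2 : (∀ j, u ≤ j → j < N → (s * reflect u g).coeff j = 0)
      ↔ (∀ d, d < n - τ → (w * reflect (n - 1) r).coeff d = 0) := by
    constructor
    · intro h d hd
      have := h (d + u) (by omega) (by omega)
      rwa [hco (d + u) (by omega) (by omega), show d + u - u = d by omega] at this
    · intro h j hj1 hj2
      rw [hco j hj1 hj2]
      exact h (j - u) (by omega)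
  have hwX : ¬ (X : F[X]) ∣ w := by
    rw [X_dvd_iff]
    intro h0
    have h1 := congrArg (fun p : F[X] => p.coeff 0) ht'
    simp only [coeff_add, mul_coeff_zero, h0, mul_zero, coeff_one] at h1
    rw [coeff_X_pow, if_neg (by omega)] at h1
    simp at h1
  have hdvd : X ^ (n - τ) ∣ w * reflect (n - 1) r ↔ X ^ (n - τ) ∣ reflect (n - 1) r :=
    ⟨fun h => prime_X.pow_dvd_of_dvd_mul_left _ hwX h, fun h => h.mul_left w⟩
  have e2 : X ^ (n - τ) ∣ reflect (n - 1) r ↔ ∀ d, d < n - τ → r.coeff (n - 1 - d) = 0 := by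
    rw [X_pow_dvd_iff]
    refine forall_congr' fun d => imp_congr_right fun hd => ?_
    rw [coeff_reflect, revAt_le (by omega : d ≤ n - 1)]
  have e3 : (∀ d, d < n - τ → r.coeff (n - 1 - d) = 0) ↔ r.degree < (τ : WithBot ℕ) := by
    constructor
    · intro h
      rw [degree_lt_iff_coeff_zero]
      intro j hj
      by_cases hjn : j ≤ n - 1
      · have := h (n - 1 - j) (by omega)
        rwa [show n - 1 - (n - 1 - j) = j by omega] at this
      · exact coeff_eq_zero_of_degree_lt (hrd.trans_le (by exact_mod_cast (by omega : n ≤ j)))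
    · intro h d hd
      exact coeff_eq_zero_of_degree_lt (h.trans_le
        (by exact_mod_cast (by omega : τ ≤ n - 1 - d)))
  exact step1.trans (step2.trans ((X_pow_dvd_iff.symm.trans (hdvd.trans e2)).trans e3))

/-- Monomialization of the SPI problem: with `n⁽ⁱ⁾ = deg m⁽ⁱ⁾`,
`b̄⁽ⁱ⁾(x) = x^{n⁽ⁱ⁾−1} b⁽ⁱ⁾(1/x)`, `m̄⁽ⁱ⁾(x) = x^{n⁽ⁱ⁾} m⁽ⁱ⁾(1/x)` (polynomial
reflections), `w⁽ⁱ⁾` the inverse of `m̄⁽ⁱ⁾` modulo `x^{n⁽ⁱ⁾−τ⁽ⁱ⁾+u}`,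
`s⁽ⁱ⁾ = w⁽ⁱ⁾ b̄⁽ⁱ⁾ mod x^{n⁽ⁱ⁾−τ⁽ⁱ⁾+u}` and
`b̃⁽ⁱ⁾(x) = x^{n⁽ⁱ⁾−τ⁽ⁱ⁾+u−1} s⁽ⁱ⁾(1/x)`, the SPI problem with data
`(b̃⁽ⁱ⁾, x^{n⁽ⁱ⁾−τ⁽ⁱ⁾+u}, u)` has the same solution `Λ` as the original
SPI problem with data `(b⁽ⁱ⁾, m⁽ⁱ⁾, τ⁽ⁱ⁾)`. -/
theorem spi_monomialization {F : Type*} [Field F] {L : ℕ}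
    (b m : Fin L → F[X]) (τ : Fin L → ℕ) (u : ℕ)
    (hm : ∀ i, 1 ≤ (m i).degree)
    (hb : ∀ i, (b i).degree < (m i).degree)
    (hτ : ∀ i, (τ i : WithBot ℕ) ≤ (m i).degree)
    (Λ : F[X]) (hΛ0 : Λ ≠ 0)
    (hΛs : ∀ i, (b i * Λ % m i).degree < (τ i : WithBot ℕ))
    (hΛmin : ∀ g : F[X], g ≠ 0 →
      (∀ i, (b i * g % m i).degree < (τ i : WithBot ℕ)) → Λ.degree ≤ g.degree)
    (hΛu : Λ.degree ≤ (u : WithBot ℕ))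
    (hpos : ∀ i, 0 < (m i).natDegree - τ i + u)
    (w : Fin L → F[X])
    (hw : ∀ i, (Polynomial.reflect ((m i).natDegree) (m i) * w i) %
      X ^ ((m i).natDegree - τ i + u) = 1)
    (bt : Fin L → F[X])
    (hbt : ∀ i, bt i = Polynomial.reflect ((m i).natDegree - τ i + u - 1)
      ((w i * Polynomial.reflect ((m i).natDegree - 1) (b i)) %
        X ^ ((m i).natDegree - τ i + u))) :
    (∀ i, (bt i * Λ % X ^ ((m i).natDegree - τ i + u)).degree < (u : WithBot ℕ)) ∧
    (∀ g : F[X], g ≠ 0 →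
      (∀ i, (bt i * g % X ^ ((m i).natDegree - τ i + u)).degree < (u : WithBot ℕ)) →
        Λ.degree ≤ g.degree) := by
  constructor
  · intro i
    rw [hbt i]
    exact (spi_key (hm i) (hb i) (hτ i) (hw i) (hpos i) hΛu).mpr (hΛs i)
  · intro g hg0 hgs
    by_cases hgu : g.degree ≤ (u : WithBot ℕ)
    · refine hΛmin g hg0 fun i => (spi_key (hm i) (hb i) (hτ i) (hw i) (hpos i) hgu).mp ?_
      have h := hgs i
      rwa [hbt i] at h
    · push_neg at hgu
      exact hΛu.trans hgu.le
end

section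
/- Remainder Decreasing Lemma: let Λ'(x), Λ''(x) be nonzero with i := i_max(Λ') = i_max(Λ'') and rd⁽ⁱ⁾(Λ') ≥ rd⁽ⁱ⁾(Λ''). Set d' = rd⁽ⁱ⁾(Λ'), d'' = rd⁽ⁱ⁾(Λ''), κ' = lcf(b⁽ⁱ⁾Λ' mod m⁽ⁱ⁾), κ'' = lcf(b⁽ⁱ⁾Λ'' mod m⁽ⁱ⁾), and Λ(x) = κ''Λ'(x) − κ'x^{d'−d''}Λ''(x). Then δ_max(Λ') ≥ δ_max(Λ''), and if Λ ≠ 0: rd⁽ⁱ⁾(Λ) < rd⁽ⁱ⁾(Λ'), δ_max(Λ) ≤ δ_max(Λ'), and either i_max(Λ) < i_max(Λ') or δ_max(Λ) < δ_max(Λ'). -/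
open Polynomial

/-- `rd⁽ⁱ⁾(Λ) = deg(b⁽ⁱ⁾ Λ mod m⁽ⁱ⁾)`. -/
noncomputable def rd {F : Type*} [Field F] {L : ℕ}
    (b m : Fin L → F[X]) (Λ : F[X]) (i : Fin L) : WithBot ℕ :=
  (b i * Λ % m i).degree

/-- `δ⁽ⁱ⁾(Λ) = rd⁽ⁱ⁾(Λ) − τ⁽ⁱ⁾`, valued in `WithBot ℤ` (`⊥` for a zero remainder). -/
noncomputable def deltaI {F : Type*} [Field F] {L : ℕ}
    (b m : Fin L → F[X]) (τ : Fin L → ℕ) (Λ : F[X]) (i : Fin L) : WithBot ℤ :=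
  WithBot.map (fun d : ℕ => (d : ℤ) - (τ i : ℤ)) (rd b m Λ i)

/-- `δ_max(Λ) = max_i (rd⁽ⁱ⁾(Λ) − τ⁽ⁱ⁾)`. -/
noncomputable def deltaMax {F : Type*} [Field F] {L : ℕ}
    (b m : Fin L → F[X]) (τ : Fin L → ℕ) (Λ : F[X]) : WithBot ℤ :=
  Finset.univ.sup (deltaI b m τ Λ)

/-- `i` is the largest index achieving `δ_max(Λ)` (i.e. `i = i_max(Λ)`). -/
def IsImax {F : Type*} [Field F] {L : ℕ}
    (b m : Fin L → F[X]) (τ : Fin L → ℕ) (Λ : F[X]) (i : Fin L) : Prop :=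
  deltaI b m τ Λ i = deltaMax b m τ Λ ∧
    ∀ j, deltaI b m τ Λ j = deltaMax b m τ Λ → j ≤ i

section AuxMod
variable {F : Type*} [Field F]

lemma aux_degree_mod_lt (p m : F[X]) (hm : m ≠ 0) : (p % m).degree < m.degree :=
  EuclideanDomain.mod_lt _ hm

lemma aux_mod_congr {m : F[X]} (hm : m ≠ 0) {a b : F[X]} (h : m ∣ a - b) :
    a % m = b % m := by
  have e1 : a % m - b % m = (a - b) - m * (a / m - b / m) := by
    have ha := EuclideanDomain.div_add_mod a m
    have hb := EuclideanDomain.div_add_mod b m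
    linear_combination ha - hb
  have hd : m ∣ a % m - b % m := by
    rw [e1]; exact dvd_sub h (Dvd.intro _ rfl)
  have hdeg : (a % m - b % m).degree < m.degree :=
    lt_of_le_of_lt (degree_sub_le _ _)
      (max_lt (aux_degree_mod_lt a m hm) (aux_degree_mod_lt b m hm))
  exact sub_eq_zero.mp (Polynomial.eq_zero_of_dvd_of_degree_lt hd hdeg)

lemma aux_mod_eq_of {m : F[X]} (hm : m ≠ 0) {q r p : F[X]} (h : p = m * q + r)
    (hr : r.degree < m.degree) : p % m = r := by
  have h2 : p % m = r % m := aux_mod_congr hm (by rw [h]; ring_nf; exact Dvd.intro _ rfl)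
  rw [h2, (Polynomial.mod_eq_self_iff hm).mpr hr]

lemma aux_degree_mod_le (p m : F[X]) : (p % m).degree ≤ p.degree := by
  by_cases hm : m = 0
  · simp [hm]
  by_cases h : p.degree < m.degree
  · rw [(Polynomial.mod_eq_self_iff hm).mpr h]
  · exact le_trans (le_of_lt (aux_degree_mod_lt p m hm)) (not_lt.1 h)

lemma aux_shift_mod {m : F[X]} (hm : m ≠ 0) (e : ℕ) (p : F[X]) :
    (X ^ e * p) % m = (X ^ e * (p % m)) % m := by
  apply aux_mod_congr hm
  have h2 : X ^ e * p - X ^ e * (p % m) = m * (X ^ e * (p / m)) := by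
    linear_combination (-(X ^ e : F[X])) * (EuclideanDomain.div_add_mod p m)
  rw [h2]; exact Dvd.intro _ rfl

lemma aux_mod_linear {m : F[X]} (hm : m ≠ 0) (c c' : F) (A B : F[X]) :
    (c • A - c' • B) % m = c • (A % m) - c' • (B % m) := by
  apply aux_mod_eq_of hm (q := c • (A / m) - c' • (B / m))
  · have hA := EuclideanDomain.div_add_mod A m
    have hB := EuclideanDomain.div_add_mod B m
    simp only [smul_eq_C_mul]
    linear_combination (-(C c : F[X])) * hA + (C c' : F[X]) * hB
  · refine lt_of_le_of_lt (degree_sub_le _ _) (max_lt ?_ ?_)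
    · exact lt_of_le_of_lt (degree_smul_le _ _) (aux_degree_mod_lt A m hm)
    · exact lt_of_le_of_lt (degree_smul_le _ _) (aux_degree_mod_lt B m hm)

end AuxMod

/-- Remainder Decreasing Lemma: with `i = i_max(Λ') = i_max(Λ'')`,
`d' = rd⁽ⁱ⁾(Λ') ≥ d'' = rd⁽ⁱ⁾(Λ'')`, leading coefficients `κ', κ''` of the two
remainders, and `Λ = κ'' Λ' − κ' x^{d'−d''} Λ''`, we have
`δ_max(Λ'') ≤ δ_max(Λ')` and, if `Λ ≠ 0`, `rd⁽ⁱ⁾(Λ) < rd⁽ⁱ⁾(Λ')`,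
`δ_max(Λ) ≤ δ_max(Λ')`, and either `i_max(Λ) < i_max(Λ')` or
`δ_max(Λ) < δ_max(Λ')`. -/
theorem spi_remainder_decreasing {F : Type*} [Field F] {L : ℕ}
    (b m : Fin L → F[X]) (τ : Fin L → ℕ)
    (hm : ∀ i, 1 ≤ (m i).degree)
    (hb : ∀ i, (b i).degree < (m i).degree)
    (hτ : ∀ i, (τ i : WithBot ℕ) ≤ (m i).degree)
    (Λ' Λ'' : F[X]) (hΛ'0 : Λ' ≠ 0) (hΛ''0 : Λ'' ≠ 0)
    (i : Fin L) (hi' : IsImax b m τ Λ' i) (hi'' : IsImax b m τ Λ'' i)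
    (hrd : rd b m Λ'' i ≤ rd b m Λ' i)
    (d' d'' : ℕ) (hd' : d' = (b i * Λ' % m i).natDegree)
    (hd'' : d'' = (b i * Λ'' % m i).natDegree)
    (κ' κ'' : F) (hκ' : κ' = (b i * Λ' % m i).leadingCoeff)
    (hκ'' : κ'' = (b i * Λ'' % m i).leadingCoeff)
    (Λ : F[X]) (hΛ : Λ = κ'' • Λ' - κ' • (X ^ (d' - d'') * Λ'')) :
    deltaMax b m τ Λ'' ≤ deltaMax b m τ Λ' ∧
    (Λ ≠ 0 →
      rd b m Λ i < rd b m Λ' i ∧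
      deltaMax b m τ Λ ≤ deltaMax b m τ Λ' ∧
      ((∃ j, IsImax b m τ Λ j ∧ j < i) ∨ deltaMax b m τ Λ < deltaMax b m τ Λ')) := by
  classical
  have hm0 : ∀ j, m j ≠ 0 := by
    intro j h
    have := hm j
    rw [h, degree_zero] at this
    exact absurd this (by simp)
  set e : ℕ := d' - d'' with he
  have hmul : ∀ j : Fin L, b j * Λ = κ'' • (b j * Λ') - κ' • (X ^ e * (b j * Λ'')) := by
    intro j
    rw [hΛ]
    simp only [smul_eq_C_mul]
    ring
  have hdecomp : ∀ j, b j * Λ % m j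
      = κ'' • (b j * Λ' % m j) - κ' • ((X ^ e * (b j * Λ'')) % m j) := by
    intro j
    rw [hmul j, aux_mod_linear (hm0 j)]
  by_cases hr' : b i * Λ' % m i = 0
  · -- degenerate: r' = 0, so r'' = 0, Λ = 0
    have hrd'bot : rd b m Λ' i = ⊥ := by simp [rd, hr']
    have hr'' : b i * Λ'' % m i = 0 := by
      have h1 : rd b m Λ'' i = ⊥ := le_bot_iff.mp (hrd'bot ▸ hrd)
      simpa [rd, degree_eq_bot] using h1
    have hΛ0 : Λ = 0 := by
      rw [hΛ, hκ', hκ'', hr', hr'']; simp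
    refine ⟨?_, fun hne => absurd hΛ0 hne⟩
    have hbot : deltaMax b m τ Λ'' = ⊥ := by
      rw [← hi''.1]; simp [deltaI, rd, hr'']
    simp [hbot]
  -- now r' ≠ 0
  have hd'deg : (b i * Λ' % m i).degree = (d' : WithBot ℕ) := by
    rw [hd']; exact degree_eq_natDegree hr'
  have hκ'0 : κ' ≠ 0 := by rw [hκ']; exact leadingCoeff_ne_zero.mpr hr'
  have hδ' : deltaMax b m τ Λ' = (((d' : ℤ) - (τ i : ℤ) : ℤ) : WithBot ℤ) := by
    rw [← hi'.1]; simp [deltaI, rd, hd'deg, Nat.cast_withBot, WithBot.map_coe]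
  have hd'lt : (d' : WithBot ℕ) < (m i).degree := hd'deg ▸ aux_degree_mod_lt _ _ (hm0 i)
  by_cases hr'' : b i * Λ'' % m i = 0
  · -- degenerate: r'' = 0, κ'' = 0
    have hκ''0 : κ'' = 0 := by rw [hκ'', hr'']; simp
    have hδ''bot : deltaMax b m τ Λ'' = ⊥ := by
      rw [← hi''.1]; simp [deltaI, rd, hr'']
    refine ⟨by simp [hδ''bot], fun hΛ0 => ?_⟩
    have hall : ∀ j, b j * Λ'' % m j = 0 := by
      intro j
      have h1 : deltaI b m τ Λ'' j ≤ ⊥ :=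
        hδ''bot ▸ Finset.le_sup (Finset.mem_univ j)
      have h2 : deltaI b m τ Λ'' j = ⊥ := le_bot_iff.mp h1
      have h3 : rd b m Λ'' j = ⊥ := by
        by_contra h4
        obtain ⟨n, hn⟩ := WithBot.ne_bot_iff_exists.mp h4
        rw [deltaI, ← hn] at h2
        simp [WithBot.map_coe] at h2
      simpa [rd, degree_eq_bot] using h3
    have hrdΛ : ∀ j, b j * Λ % m j = 0 := by
      intro j
      rw [hdecomp j, aux_shift_mod (hm0 j), hall j, hκ''0]
      simp
    have hrdΛbot : ∀ j, rd b m Λ j = ⊥ := by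
      intro j; simp [rd, hrdΛ j]
    have hδbot : deltaMax b m τ Λ = ⊥ := by
      refine le_bot_iff.mp (Finset.sup_le fun j _ => ?_)
      simp [deltaI, hrdΛbot j]
    refine ⟨?_, by simp [hδbot], Or.inr ?_⟩
    · rw [hrdΛbot i, rd, hd'deg]
      exact WithBot.bot_lt_coe _
    · rw [hδbot, hδ']
      exact WithBot.bot_lt_coe _
  -- main case: r' ≠ 0, r'' ≠ 0
  have hd''deg : (b i * Λ'' % m i).degree = (d'' : WithBot ℕ) := by
    rw [hd'']; exact degree_eq_natDegree hr''
  have hκ''0 : κ'' ≠ 0 := by rw [hκ'']; exact leadingCoeff_ne_zero.mpr hr''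
  have hδ'' : deltaMax b m τ Λ'' = (((d'' : ℤ) - (τ i : ℤ) : ℤ) : WithBot ℤ) := by
    rw [← hi''.1]; simp [deltaI, rd, hd''deg, Nat.cast_withBot, WithBot.map_coe]
  have hdle : d'' ≤ d' := by
    rw [hd', hd'']
    exact natDegree_le_natDegree hrd
  have hed : e + d'' = d' := by omega
  have hfirst : deltaMax b m τ Λ'' ≤ deltaMax b m τ Λ' := by
    rw [hδ', hδ'']
    exact WithBot.coe_le_coe.mpr (by push_cast; omega)
  refine ⟨hfirst, fun hΛ0 => ?_⟩
  -- the remainder at i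
  have hshift_i : (X ^ e * (b i * Λ'')) % m i = X ^ e * (b i * Λ'' % m i) := by
    rw [aux_shift_mod (hm0 i)]
    apply (Polynomial.mod_eq_self_iff (hm0 i)).mpr
    rw [degree_mul, degree_X_pow, hd''deg, ← Nat.cast_add, hed]
    exact hd'lt
  have hrem_i : b i * Λ % m i
      = κ'' • (b i * Λ' % m i) - κ' • (X ^ e * (b i * Λ'' % m i)) := by
    rw [hdecomp i, hshift_i]
  have hrdΛi : rd b m Λ i < rd b m Λ' i := by
    show (b i * Λ % m i).degree < (b i * Λ' % m i).degree
    rw [hrem_i]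
    have hdegp : (κ'' • (b i * Λ' % m i)).degree = (d' : WithBot ℕ) := by
      rw [smul_eq_C_mul, degree_mul, degree_C hκ''0, zero_add, hd'deg]
    have hdegq : (κ' • (X ^ e * (b i * Λ'' % m i))).degree = (d' : WithBot ℕ) := by
      rw [smul_eq_C_mul, degree_mul, degree_C hκ'0, zero_add, degree_mul,
        degree_X_pow, hd''deg, ← Nat.cast_add, hed]
    have hp0 : κ'' • (b i * Λ' % m i) ≠ 0 := by
      intro h; rw [h] at hdegp; simp [degree_zero] at hdegp
    have hlc : (κ'' • (b i * Λ' % m i)).leadingCoeff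
        = (κ' • (X ^ e * (b i * Λ'' % m i))).leadingCoeff := by
      simp only [smul_eq_C_mul, leadingCoeff_mul, leadingCoeff_C, leadingCoeff_X_pow]
      rw [← hκ', ← hκ'']
      ring
    calc (κ'' • (b i * Λ' % m i) - κ' • (X ^ e * (b i * Λ'' % m i))).degree
        < (κ'' • (b i * Λ' % m i)).degree := degree_sub_lt (hdegp.trans hdegq.symm) hp0 hlc
      _ = (b i * Λ' % m i).degree := by rw [hdegp, hd'deg]
  -- strictness of non-imax indices
  have hstrict' : ∀ j, i < j → deltaI b m τ Λ' j < deltaMax b m τ Λ' := by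
    intro j hj
    refine lt_of_le_of_ne (Finset.le_sup (Finset.mem_univ j)) fun h => ?_
    exact absurd (hi'.2 j h) (not_le.mpr hj)
  have hstrict'' : ∀ j, i < j → deltaI b m τ Λ'' j < deltaMax b m τ Λ'' := by
    intro j hj
    refine lt_of_le_of_ne (Finset.le_sup (Finset.mem_univ j)) fun h => ?_
    exact absurd (hi''.2 j h) (not_le.mpr hj)
  -- the pointwise bound
  have hbound : ∀ j, deltaI b m τ Λ j ≤ deltaMax b m τ Λ' ∧
      (i < j → deltaI b m τ Λ j < deltaMax b m τ Λ') := by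
    intro j
    have hdegbd : (b j * Λ % m j).degree ≤
        max (b j * Λ' % m j).degree ((e : WithBot ℕ) + (b j * Λ'' % m j).degree) := by
      rw [hdecomp j]
      refine le_trans (degree_sub_le _ _) (max_le_max (degree_smul_le _ _) ?_)
      refine le_trans (degree_smul_le _ _) ?_
      rw [aux_shift_mod (hm0 j)]
      refine le_trans (aux_degree_mod_le _ _) ?_
      rw [degree_mul, degree_X_pow]
    cases hD : (b j * Λ % m j).degree with
    | bot =>
      have hbotI : deltaI b m τ Λ j = ⊥ := by simp [deltaI, rd, hD]
      refine ⟨hbotI ▸ bot_le, fun _ => ?_⟩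
      rw [hbotI, hδ']
      exact WithBot.bot_lt_coe _
    | coe n =>
      rw [hD] at hdegbd
      have hIval : deltaI b m τ Λ j = (((n : ℤ) - (τ j : ℤ) : ℤ) : WithBot ℤ) := by
        simp [deltaI, rd, hD]
      rcases le_max_iff.mp hdegbd with hA | hB
      · cases hA' : (b j * Λ' % m j).degree with
        | bot => rw [hA'] at hA; exact absurd hA (by simp)
        | coe n' =>
          rw [hA'] at hA
          have hn : n ≤ n' := WithBot.coe_le_coe.mp hA
          have hdj' : deltaI b m τ Λ' j = (((n' : ℤ) - (τ j : ℤ) : ℤ) : WithBot ℤ) := by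
            simp [deltaI, rd, hA']
          have h1 : deltaI b m τ Λ j ≤ deltaI b m τ Λ' j := by
            rw [hIval, hdj']
            exact WithBot.coe_le_coe.mpr (by omega)
          exact ⟨le_trans h1 (Finset.le_sup (Finset.mem_univ j)),
            fun hj => lt_of_le_of_lt h1 (hstrict' j hj)⟩
      · cases hB' : (b j * Λ'' % m j).degree with
        | bot => rw [hB'] at hB; exact absurd hB (by simp)
        | coe n'' =>
          rw [hB'] at hB
          have hn : n ≤ e + n'' := by
            simp only [Nat.cast_withBot] at hB
            rw [← WithBot.coe_add] at hB
            exact WithBot.coe_le_coe.mp hB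
          have hdj'' : deltaI b m τ Λ'' j = (((n'' : ℤ) - (τ j : ℤ) : ℤ) : WithBot ℤ) := by
            simp [deltaI, rd, hB']
          have h2 : deltaI b m τ Λ'' j ≤ deltaMax b m τ Λ'' :=
            Finset.le_sup (Finset.mem_univ j)
          rw [hdj'', hδ''] at h2
          have h2' : (n'' : ℤ) - (τ j : ℤ) ≤ (d'' : ℤ) - (τ i : ℤ) :=
            WithBot.coe_le_coe.mp h2
          constructor
          · rw [hIval, hδ']
            exact WithBot.coe_le_coe.mpr (by push_cast at h2' ⊢; omega)
          · intro hj
            have h3 := hstrict'' j hj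
            rw [hdj'', hδ''] at h3
            have h3' : (n'' : ℤ) - (τ j : ℤ) < (d'' : ℤ) - (τ i : ℤ) :=
              WithBot.coe_lt_coe.mp h3
            rw [hIval, hδ']
            exact WithBot.coe_lt_coe.mpr (by push_cast at h3' ⊢; omega)
  have hδle : deltaMax b m τ Λ ≤ deltaMax b m τ Λ' :=
    Finset.sup_le fun j _ => (hbound j).1
  refine ⟨hrdΛi, hδle, ?_⟩
  rcases lt_or_eq_of_le hδle with hlt | heq
  · exact Or.inr hlt
  · left
    -- strict at i as deltaI
    have hstrict_i : deltaI b m τ Λ i < deltaMax b m τ Λ' := by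
      rw [hδ']
      cases hDi : rd b m Λ i with
      | bot => simp [deltaI, hDi]
      | coe n =>
        have hn : n < d' := by
          have h4 := hrdΛi
          rw [hDi] at h4
          simp only [rd, hd'deg, Nat.cast_withBot] at h4
          exact WithBot.coe_lt_coe.mp h4
        simp only [deltaI, hDi, WithBot.map_coe]
        exact WithBot.coe_lt_coe.mpr (by omega)
    have hall_lt : ∀ j, i ≤ j → deltaI b m τ Λ j < deltaMax b m τ Λ' := by
      intro j hj
      rcases eq_or_lt_of_le hj with rfl | hj'
      · exact hstrict_i
      · exact (hbound j).2 hj'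
    -- construct the maximal achiever
    have hL : Nonempty (Fin L) := ⟨i⟩
    obtain ⟨j₀, -, hj₀⟩ := Finset.exists_mem_eq_sup Finset.univ Finset.univ_nonempty
      (deltaI b m τ Λ)
    set s : Finset (Fin L) := Finset.univ.filter (fun j => deltaI b m τ Λ j = deltaMax b m τ Λ)
      with hs
    have hj₀s : j₀ ∈ s := by
      simp only [hs, Finset.mem_filter, Finset.mem_univ, true_and]
      exact hj₀.symm
    have hsne : s.Nonempty := ⟨j₀, hj₀s⟩
    set jm := s.max' hsne with hjm
    have hjms : jm ∈ s := s.max'_mem hsne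
    have hjmval : deltaI b m τ Λ jm = deltaMax b m τ Λ := by
      simpa [hs, Finset.mem_filter] using hjms
    have hjmmax : ∀ j, deltaI b m τ Λ j = deltaMax b m τ Λ → j ≤ jm := by
      intro j hj
      exact s.le_max' j (by simp [hs, Finset.mem_filter, hj])
    have hjmlt : jm < i := by
      by_contra h
      have h2 : i ≤ jm := not_lt.mp h
      have := hall_lt jm h2
      rw [hjmval, heq] at this
      exact lt_irrefl _ this
    exact ⟨jm, ⟨hjmval, hjmmax⟩, hjmlt⟩
end

section
/- Equivalence of the partial-inverse conditions on E and on Y: if |U_E| ≤ n − k_max, then a polynomial Λ(x) with deg Λ(x) ≤ |U_E| satisfies deg(E⁽ⁱ⁾(x)Λ(x) mod m(x)) < k⁽ⁱ⁾ + |U_E| for all i if and only if it satisfies deg(Y⁽ⁱ⁾(x)Λ(x) mod m(x)) < k⁽ⁱ⁾ + |U_E| for all i; consequently the minimal-degree nonzero solutions of the two families of conditions coincide. -/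
/-!
Since `deg (C⁽ⁱ⁾ Λ) < k⁽ⁱ⁾ + |U_E| ≤ n = deg m`, reduction modulo `m` leaves `C⁽ⁱ⁾ Λ` untouched, so
`Y⁽ⁱ⁾ Λ mod m` and `E⁽ⁱ⁾ Λ mod m` differ by a polynomial of degree below the bound `k⁽ⁱ⁾ + |U_E|`,
and the two conditions agree whenever `deg Λ ≤ |U_E|`. The error locator `Λ_E = ∏_{ℓ ∈ U_E} (x - β_ℓ)`
satisfies the condition on `E` exactly (`m ∣ E⁽ⁱ⁾ Λ_E`) and has degree `|U_E|`, so every minimal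
solution of either problem has degree at most `|U_E|`, where the two problems coincide.
-/

open Polynomial

section Minimizer

variable {α γ : Type*} [LinearOrder γ] (d : α → γ) {P Q : α → Prop} {b : γ} {w : α}

theorem and_forall_le_of_agree_below (hw : P w) (hwb : d w ≤ b)
    (hPQ : ∀ g, d g ≤ b → (P g ↔ Q g)) {x : α} (hx : P x ∧ ∀ g, P g → d x ≤ d g) :
    Q x ∧ ∀ g, Q g → d x ≤ d g := by
  obtain ⟨hPx, hmin⟩ := hx
  have hxb : d x ≤ b := (hmin w hw).trans hwb
  refine ⟨(hPQ x hxb).1 hPx, fun g hQg => ?_⟩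
  rcases le_or_gt (d g) b with hgb | hbg
  · exact hmin g ((hPQ g hgb).2 hQg)
  · exact hxb.trans hbg.le

theorem and_forall_le_iff_of_agree_below (hw : P w) (hwb : d w ≤ b)
    (hPQ : ∀ g, d g ≤ b → (P g ↔ Q g)) (x : α) :
    (P x ∧ ∀ g, P g → d x ≤ d g) ↔ (Q x ∧ ∀ g, Q g → d x ≤ d g) :=
  ⟨and_forall_le_of_agree_below d hw hwb hPQ,
    and_forall_le_of_agree_below d ((hPQ w hwb).1 hw) hwb fun g hg => (hPQ g hg).symm⟩

end Minimizer

namespace Polynomial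

theorem degree_add_lt_iff_of_degree_lt_s13 {R : Type*} [Ring R] {p q : R[X]} {D : WithBot ℕ}
    (hp : p.degree < D) : (p + q).degree < D ↔ q.degree < D := by
  refine ⟨fun h => ?_, fun h => (degree_add_le p q).trans_lt (max_lt hp h)⟩
  have := (degree_sub_le (p + q) p).trans_lt (max_lt h hp)
  rwa [add_sub_cancel_left] at this

variable {F : Type*} [Field F]

theorem add_mod_of_degree_lt {a m : F[X]} (e : F[X]) (ha : a.degree < m.degree) :
    (a + e) % m = a + e % m := by
  rw [add_mod, (mod_eq_self_iff (ne_zero_of_degree_gt ha)).2 ha]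

theorem degree_add_mul_mod_lt_iff {c e Λ m : F[X]} {k u : ℕ} (hc : c.degree < k)
    (hΛ : Λ.degree ≤ u) (hm : ((k + u : ℕ) : WithBot ℕ) ≤ m.degree) :
    ((c + e) * Λ % m).degree < (k + u : ℕ) ↔ (e * Λ % m).degree < (k + u : ℕ) := by
  have hcΛ : (c * Λ).degree < (k + u : ℕ) := by
    rcases eq_or_ne Λ 0 with rfl | hΛ0
    · simp
    · rw [Nat.cast_add]
      exact (degree_mul_le c Λ).trans_lt
        (WithBot.add_lt_add_of_lt_of_le (degree_ne_bot.2 hΛ0) hc hΛ)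
  rw [add_mul, add_mod_of_degree_lt _ (hcΛ.trans_le hm)]
  exact degree_add_lt_iff_of_degree_lt_s13 hcΛ

variable {ι : Type*} [Fintype ι] {β : ι → F}

theorem prod_X_sub_C_dvd_of_forall_isRoot (hβ : Function.Injective β) {p : F[X]}
    (hp : ∀ ℓ, p.IsRoot (β ℓ)) : ∏ ℓ, (X - C (β ℓ)) ∣ p :=
  Fintype.prod_dvd_of_coprime (pairwise_coprime_X_sub_C hβ) fun ℓ => dvd_iff_isRoot.2 (hp ℓ)

theorem mul_prod_X_sub_C_mod_eq_zero (hβ : Function.Injective β) {e : F[X]} {U : Finset ι}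
    (hU : ∀ ℓ ∉ U, e.IsRoot (β ℓ)) :
    (e * ∏ ℓ ∈ U, (X - C (β ℓ))) % ∏ ℓ, (X - C (β ℓ)) = 0 := by
  refine EuclideanDomain.mod_eq_zero.2 (prod_X_sub_C_dvd_of_forall_isRoot hβ fun ℓ => ?_)
  by_cases hℓ : ℓ ∈ U
  · simp [eval_prod, Finset.prod_eq_zero hℓ]
  · simp [(hU ℓ hℓ).eq_zero]

end Polynomial

theorem partialInverse_condition_E_iff_Y_general {F : Type*} [Field F] {L n : ℕ}
    (β : Fin n → F) (hβ : Function.Injective β)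
    (c E : Fin L → F[X]) (k : Fin L → ℕ)
    (hc : ∀ i, (c i).degree < (k i : WithBot ℕ))
    (hkn : ∀ i, k i < n)
    (U : Finset (Fin n))
    (hU : ∀ ℓ, ℓ ∈ U ↔ ∃ i, (E i).eval (β ℓ) ≠ 0)
    (hcard : U.card ≤ n - Finset.univ.sup k) :
    (∀ Λ : F[X], Λ.degree ≤ (U.card : WithBot ℕ) →
      ((∀ i, ((E i) * Λ % (∏ ℓ, (X - C (β ℓ)))).degree < ((k i + U.card : ℕ) : WithBot ℕ)) ↔
       (∀ i, ((c i + E i) * Λ % (∏ ℓ, (X - C (β ℓ)))).degree < ((k i + U.card : ℕ) : WithBot ℕ)))) ∧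
    (∀ Λ : F[X],
      (Λ ≠ 0 ∧
        (∀ i, ((E i) * Λ % (∏ ℓ, (X - C (β ℓ)))).degree < ((k i + U.card : ℕ) : WithBot ℕ)) ∧
        (∀ g : F[X], g ≠ 0 →
          (∀ i, ((E i) * g % (∏ ℓ, (X - C (β ℓ)))).degree < ((k i + U.card : ℕ) : WithBot ℕ)) →
          Λ.degree ≤ g.degree)) ↔
      (Λ ≠ 0 ∧
        (∀ i, ((c i + E i) * Λ % (∏ ℓ, (X - C (β ℓ)))).degree < ((k i + U.card : ℕ) : WithBot ℕ)) ∧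
        (∀ g : F[X], g ≠ 0 →
          (∀ i, ((c i + E i) * g % (∏ ℓ, (X - C (β ℓ)))).degree < ((k i + U.card : ℕ) : WithBot ℕ)) →
          Λ.degree ≤ g.degree))) := by
  set m : F[X] := ∏ ℓ, (X - C (β ℓ))
  set ΛE : F[X] := ∏ ℓ ∈ U, (X - C (β ℓ))
  have hΛE_ne : ΛE ≠ 0 := (monic_prod_of_monic _ _ fun ℓ _ => monic_X_sub_C _).ne_zero
  have hdeg_m : m.degree = n := by simp [m, degree_prod]
  have hdeg_ΛE : ΛE.degree = U.card := by simp [ΛE, degree_prod]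
  have hbound : ∀ i, k i + U.card ≤ n := fun i => by
    have := Finset.le_sup (f := k) (Finset.mem_univ i)
    have := hkn i
    omega
  have hagree : ∀ Λ : F[X], Λ.degree ≤ U.card → ∀ i,
      ((E i * Λ % m).degree < ((k i + U.card : ℕ) : WithBot ℕ) ↔
        ((c i + E i) * Λ % m).degree < ((k i + U.card : ℕ) : WithBot ℕ)) := fun Λ hΛ i =>
    (degree_add_mul_mod_lt_iff (hc i) hΛ (hdeg_m ▸ by exact_mod_cast hbound i)).symm
  have hΛE : ∀ i, (E i * ΛE % m).degree < ((k i + U.card : ℕ) : WithBot ℕ) := fun i => by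
    have hvanish : E i * ΛE % m = 0 :=
      mul_prod_X_sub_C_mod_eq_zero hβ fun ℓ hℓ => not_not.1 fun h => hℓ ((hU ℓ).2 ⟨i, h⟩)
    rw [hvanish]
    exact WithBot.bot_lt_coe _
  refine ⟨fun Λ hΛ => forall_congr' (hagree Λ hΛ), fun Λ => ?_⟩
  simpa only [and_assoc, and_imp] using
    and_forall_le_iff_of_agree_below degree
      (P := fun g => g ≠ 0 ∧ ∀ i, (E i * g % m).degree < ((k i + U.card : ℕ) : WithBot ℕ))
      (Q := fun g => g ≠ 0 ∧ ∀ i, ((c i + E i) * g % m).degree < ((k i + U.card : ℕ) : WithBot ℕ))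
      ⟨hΛE_ne, hΛE⟩ hdeg_ΛE.le
      (fun g hg => and_congr_right' (forall_congr' (hagree g hg))) Λ

/-- Equivalence of the partial-inverse conditions on `E` and on `Y = C + E`:
if `|U_E| ≤ n − k_max`, then for `Λ` with `deg Λ ≤ |U_E|` the conditions
`deg(E⁽ⁱ⁾ Λ mod m) < k⁽ⁱ⁾ + |U_E|` (all `i`) and
`deg(Y⁽ⁱ⁾ Λ mod m) < k⁽ⁱ⁾ + |U_E|` (all `i`) are equivalent; consequently the
minimal-degree nonzero solutions of the two SPI problems coincide. -/
theorem partialInverse_condition_E_iff_Y {F : Type*} [Field F] {L n : ℕ}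
    (β : Fin n → F) (hβ : Function.Injective β)
    (c E : Fin L → F[X]) (k : Fin L → ℕ)
    (hc : ∀ i, (c i).degree < (k i : WithBot ℕ))
    (hkn : ∀ i, k i < n)
    (hE : ∀ i, (E i).degree < (n : WithBot ℕ))
    (U : Finset (Fin n))
    (hU : ∀ ℓ, ℓ ∈ U ↔ ∃ i, (E i).eval (β ℓ) ≠ 0)
    (hcard : U.card ≤ n - Finset.univ.sup k) :
    (∀ Λ : F[X], Λ.degree ≤ (U.card : WithBot ℕ) →
      ((∀ i, ((E i) * Λ % (∏ ℓ, (X - C (β ℓ)))).degree < ((k i + U.card : ℕ) : WithBot ℕ)) ↔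
       (∀ i, ((c i + E i) * Λ % (∏ ℓ, (X - C (β ℓ)))).degree < ((k i + U.card : ℕ) : WithBot ℕ)))) ∧
    (∀ Λ : F[X],
      (Λ ≠ 0 ∧
        (∀ i, ((E i) * Λ % (∏ ℓ, (X - C (β ℓ)))).degree < ((k i + U.card : ℕ) : WithBot ℕ)) ∧
        (∀ g : F[X], g ≠ 0 →
          (∀ i, ((E i) * g % (∏ ℓ, (X - C (β ℓ)))).degree < ((k i + U.card : ℕ) : WithBot ℕ)) →
          Λ.degree ≤ g.degree)) ↔
      (Λ ≠ 0 ∧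
        (∀ i, ((c i + E i) * Λ % (∏ ℓ, (X - C (β ℓ)))).degree < ((k i + U.card : ℕ) : WithBot ℕ)) ∧
        (∀ g : F[X], g ≠ 0 →
          (∀ i, ((c i + E i) * g % (∏ ℓ, (X - C (β ℓ)))).degree < ((k i + U.card : ℕ) : WithBot ℕ)) →
          Λ.degree ≤ g.degree))) :=
  partialInverse_condition_E_iff_Y_general β hβ c E k hc hkn U hU hcard
end

section
/- Roth–Vontobel-type rank lemma: let E ∈ F^{L×n} be an error matrix of rank r_E with column support U_E satisfying 2|U_E| < n − k_max + r_E. Then any nonzero polynomial Λ(x) satisfying deg(E⁽ⁱ⁾(x)Λ(x) mod m(x)) < k⁽ⁱ⁾ + |U_E| for all i ∈ {1,…,L} is divisible by Λ_E(x) = Π_{ℓ∈U_E}(x − β_ℓ). -/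
/-!
Let `S ⊆ U` be the error positions at which `Λ` does not vanish, and suppose `S ≠ ∅`.
Each `Γᵢ = E⁽ⁱ⁾ Λ mod m` takes the values `E i ℓ · Λ(β_ℓ)`, so it vanishes off `S` and factors as
`Γᵢ = P σᵢ` with `P = ∏_{ℓ ∉ S} (x − β_ℓ)`; hence `deg σᵢ < D := k_max + |U| − (n − |S|)`.
For `ℓ ∈ S` the column `ℓ` of `E` is a multiple of `(σᵢ(β_ℓ))ᵢ`, a combination of the `D`
coefficient vectors of the `σᵢ`, while the other `|U| − |S|` nonzero columns add at most that many
dimensions. So `rank E ≤ |U| − |S| + D = k_max + 2|U| − n`, contradicting the hypothesis.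
-/

open Polynomial

namespace Polynomial

variable {K : Type*} [Field K]

theorem prod_X_sub_C_dvd_of_eval_eq_zero {ι : Type*} {β : ι → K} (hβ : Function.Injective β)
    (s : Finset ι) {p : K[X]} (h : ∀ i ∈ s, p.eval (β i) = 0) :
    (∏ i ∈ s, (X - C (β i))) ∣ p :=
  Finset.prod_dvd_of_coprime ((pairwise_coprime_X_sub_C hβ).set_pairwise _)
    fun i hi => dvd_iff_isRoot.mpr (h i hi)

theorem eval_mod_of_eval_eq_zero {p q : K[X]} {a : K} (hq : q.eval a = 0) :
    (p % q).eval a = p.eval a := by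
  rw [EuclideanDomain.mod_eq_sub_mul_div, eval_sub, eval_mul, hq, zero_mul, sub_zero]

theorem degree_lt_sub_natDegree_of_degree_mul_lt {R : Type*} [Semiring R] [NoZeroDivisors R]
    {p q : R[X]} {N : ℕ} (hp : p ≠ 0) (h : (p * q).degree < N) :
    q.degree < ↑(N - p.natDegree) := by
  rcases eq_or_ne q 0 with rfl | hq
  · simp
  rw [degree_eq_natDegree (mul_ne_zero hp hq), natDegree_mul hp hq, Nat.cast_lt] at h
  rw [degree_eq_natDegree hq, Nat.cast_lt]
  omega

theorem eval_mem_span_coeff {R ι : Type*} [CommRing R] {D : ℕ} (σ : ι → R[X])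
    (hσ : ∀ i, (σ i).degree < D) (a : R) :
    (fun i => (σ i).eval a) ∈
      Submodule.span R (Set.range fun (j : Fin D) i => (σ i).coeff j) := by
  have hsum : (fun i => (σ i).eval a) = ∑ j : Fin D, a ^ (j : ℕ) • fun i => (σ i).coeff j := by
    ext i
    rcases eq_or_ne (σ i) 0 with hi | hi
    · simp [hi]
    rw [eval_eq_sum_range' ((natDegree_lt_iff_degree_lt hi).mpr (hσ i)),
      ← Fin.sum_univ_eq_sum_range]
    simp [mul_comm]
  rw [hsum]
  exact Submodule.sum_mem _ fun j _ => Submodule.smul_mem _ _ (Submodule.subset_span ⟨j, rfl⟩)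

theorem mem_span_coeff_of_mul_eval_eq {ι : Type*} {D : ℕ} {σ : ι → K[X]}
    (hσ : ∀ i, (σ i).degree < D) {e : ι → K} {a c d : K} (hd : d ≠ 0)
    (h : ∀ i, e i * d = c * (σ i).eval a) :
    e ∈ Submodule.span K (Set.range fun (j : Fin D) i => (σ i).coeff j) := by
  have he : e = (c * d⁻¹) • fun i => (σ i).eval a := by
    ext i
    rw [Pi.smul_apply, smul_eq_mul, mul_right_comm, eq_mul_inv_iff_mul_eq₀ hd, h i]
  rw [he]
  exact Submodule.smul_mem _ _ (eval_mem_span_coeff σ hσ a)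

end Polynomial

namespace Matrix

theorem rank_le_card_add_finrank_of_col_mem {m n K : Type*} [Field K] [Fintype m] [Fintype n]
    (A : Matrix m n K) (T : Finset n) (W : Submodule K (m → K)) (hW : ∀ j ∉ T, A.col j ∈ W) :
    A.rank ≤ T.card + Module.finrank K W := by
  classical
  set V := Submodule.span K (A.col '' T)
  have hcols : Submodule.span K (Set.range A.col) ≤ V ⊔ W := by
    refine Submodule.span_le.mpr (Set.range_subset_iff.mpr fun j => ?_)
    by_cases hj : j ∈ T
    · exact Submodule.mem_sup_left (Submodule.subset_span ⟨j, hj, rfl⟩)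
    · exact Submodule.mem_sup_right (hW j hj)
  have hV : Module.finrank K V ≤ T.card := by
    have h := (finrank_span_finset_le_card (R := K) (T.image A.col)).trans Finset.card_image_le
    rwa [Set.finrank, Finset.coe_image] at h
  rw [rank_eq_finrank_span_cols]
  calc Module.finrank K (Submodule.span K (Set.range A.col))
      ≤ Module.finrank K ↥(V ⊔ W) := Submodule.finrank_mono hcols
    _ ≤ Module.finrank K V + Module.finrank K W :=
      Submodule.finrank_add_le_finrank_add_finrank _ _
    _ ≤ T.card + Module.finrank K W := by omega

end Matrix

theorem rank_add_card_le_of_eval_ne_zero {F ι κ : Type*} [Field F] [Fintype ι] [Fintype κ]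
    {β : ι → F} (hβ : Function.Injective β) {E : Matrix κ ι F} {U : Finset ι}
    (hU : ∀ ℓ ∉ U, E.col ℓ = 0) {Λ : F[X]} {Γ : κ → F[X]}
    (hΓ : ∀ i ℓ, (Γ i).eval (β ℓ) = E i ℓ * Λ.eval (β ℓ)) {N : ℕ} (hΓ_deg : ∀ i, (Γ i).degree < N)
    {ℓ₀ : ι} (hℓ₀ : E.col ℓ₀ ≠ 0) (hΛℓ₀ : Λ.eval (β ℓ₀) ≠ 0) :
    E.rank + Fintype.card ι ≤ N + U.card := by
  classical
  set S := U.filter fun ℓ => Λ.eval (β ℓ) ≠ 0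
  set P := ∏ ℓ ∈ Sᶜ, (X - C (β ℓ))
  have hP : P ≠ 0 := (monic_prod_of_monic _ _ fun ℓ _ => monic_X_sub_C _).ne_zero
  have hPΓ : ∀ i, P ∣ Γ i := fun i => prod_X_sub_C_dvd_of_eval_eq_zero hβ _ fun ℓ hℓ => by
    rw [hΓ]
    by_cases hℓU : ℓ ∈ U
    · have : Λ.eval (β ℓ) = 0 := by simpa [S, hℓU] using hℓ
      rw [this, mul_zero]
    · rw [show E i ℓ = 0 from congrFun (hU ℓ hℓU) i, zero_mul]
  choose σ hσ using hPΓ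
  set D := N - (Fintype.card ι - S.card)
  have hσ_deg : ∀ i, (σ i).degree < D := fun i => by
    have h := degree_lt_sub_natDegree_of_degree_mul_lt hP (hσ i ▸ hΓ_deg i)
    rwa [natDegree_finsetProd_X_sub_C_eq_card, Finset.card_compl] at h
  set W := Submodule.span F (Set.range fun (j : Fin D) i => (σ i).coeff j)
  have hS_col : ∀ ℓ ∈ S, E.col ℓ ∈ W := fun ℓ hℓ =>
    mem_span_coeff_of_mul_eval_eq hσ_deg (Finset.mem_filter.mp hℓ).2 fun i => by
      rw [Matrix.col_apply, ← hΓ, hσ, eval_mul]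
  have hW : ∀ ℓ ∉ U \ S, E.col ℓ ∈ W := fun ℓ hℓ => by
    by_cases hℓU : ℓ ∈ U
    · exact hS_col ℓ (by simpa [hℓU] using hℓ)
    · rw [hU ℓ hℓU]
      exact W.zero_mem
  have hℓ₀S : ℓ₀ ∈ S := Finset.mem_filter.mpr ⟨by_contra fun h => hℓ₀ (hU ℓ₀ h), hΛℓ₀⟩
  -- `D ≥ 1`, so the truncated subtraction defining `D` is exact
  have hW_pos : 1 ≤ Module.finrank F W :=
    Submodule.one_le_finrank_iff.mpr ((Submodule.ne_bot_iff W).mpr ⟨_, hS_col ℓ₀ hℓ₀S, hℓ₀⟩)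
  have hW_le : Module.finrank F W ≤ D := (finrank_range_le_card _).trans (Fintype.card_fin D).le
  have hrank := E.rank_le_card_add_finrank_of_col_mem _ W hW
  have hSU : S.card ≤ U.card := Finset.card_filter_le _ _
  have hU_le : U.card ≤ Fintype.card ι := Finset.card_le_univ U
  have hUS : (U \ S).card = U.card - S.card :=
    Finset.card_sdiff_of_subset (Finset.filter_subset _ _)
  omega

theorem rank_lemma_errorLocator_dvd_general {F : Type*} [Field F] {L n : ℕ}
    (β : Fin n → F) (hβ : Function.Injective β)
    (E : Matrix (Fin L) (Fin n) F)
    (Epoly : Fin L → F[X])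
    (hEval : ∀ i ℓ, (Epoly i).eval (β ℓ) = E i ℓ)
    (U : Finset (Fin n))
    (hU : ∀ ℓ, ℓ ∈ U ↔ ∃ i, E i ℓ ≠ 0)
    (k : Fin L → ℕ) (hkn : ∀ i, k i < n)
    (hrank : 2 * U.card < n - Finset.univ.sup k + E.rank) :
    ∀ Λ : F[X], Λ ≠ 0 →
      (∀ i, ((Epoly i) * Λ % (∏ ℓ, (X - C (β ℓ)))).degree <
        ((k i + U.card : ℕ) : WithBot ℕ)) →
      (∏ ℓ ∈ U, (X - C (β ℓ))) ∣ Λ := by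
  intro Λ _ hdeg
  refine prod_X_sub_C_dvd_of_eval_eq_zero hβ U fun ℓ₀ hℓ₀ => ?_
  by_contra hΛℓ₀
  have hE_col : E.col ℓ₀ ≠ 0 := by
    obtain ⟨i, hi⟩ := (hU ℓ₀).mp hℓ₀
    exact fun h => hi (congrFun h i)
  have hΓ : ∀ i ℓ, (Epoly i * Λ % ∏ ℓ, (X - C (β ℓ))).eval (β ℓ) = E i ℓ * Λ.eval (β ℓ) :=
    fun i ℓ => by
      rw [eval_mod_of_eval_eq_zero (by simp [eval_prod, Finset.prod_eq_zero_iff, sub_eq_zero]),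
        eval_mul, hEval]
  have hΓ_deg : ∀ i, (Epoly i * Λ % ∏ ℓ, (X - C (β ℓ))).degree < ↑(Finset.univ.sup k + U.card) :=
    fun i => (hdeg i).trans_le (by gcongr; exact Finset.le_sup (Finset.mem_univ i))
  have hU_zero : ∀ ℓ ∉ U, E.col ℓ = 0 := fun ℓ hℓ => funext fun i =>
    by_contra fun h => hℓ ((hU ℓ).mpr ⟨i, h⟩)
  have h := rank_add_card_le_of_eval_ne_zero hβ hU_zero hΓ hΓ_deg hE_col hΛℓ₀
  have hk : Finset.univ.sup k ≤ n := Finset.sup_le fun i _ => (hkn i).le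
  rw [Fintype.card_fin] at h
  omega

/-- Roth–Vontobel-type rank lemma: if `2|U_E| < n − k_max + rank E`, then any
nonzero polynomial `Λ` with `deg(E⁽ⁱ⁾ Λ mod m) < k⁽ⁱ⁾ + |U_E|` for all `i` is
divisible by the error locator `Λ_E = ∏_{ℓ∈U_E} (x − β_ℓ)`. -/
theorem rank_lemma_errorLocator_dvd {F : Type*} [Field F] {L n : ℕ}
    (β : Fin n → F) (hβ : Function.Injective β)
    (E : Matrix (Fin L) (Fin n) F)
    (Epoly : Fin L → F[X])
    (hEdeg : ∀ i, (Epoly i).degree < (n : WithBot ℕ))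
    (hEval : ∀ i ℓ, (Epoly i).eval (β ℓ) = E i ℓ)
    (U : Finset (Fin n))
    (hU : ∀ ℓ, ℓ ∈ U ↔ ∃ i, E i ℓ ≠ 0)
    (k : Fin L → ℕ) (hkn : ∀ i, k i < n)
    (hrank : 2 * U.card < n - Finset.univ.sup k + E.rank) :
    ∀ Λ : F[X], Λ ≠ 0 →
      (∀ i, ((Epoly i) * Λ % (∏ ℓ, (X - C (β ℓ)))).degree <
        ((k i + U.card : ℕ) : WithBot ℕ)) →
      (∏ ℓ ∈ U, (X - C (β ℓ))) ∣ Λ :=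
  rank_lemma_errorLocator_dvd_general β hβ E Epoly hEval U hU k hkn hrank
end

section
/- If an error pattern E of rank r_E satisfies |U_E| ≤ (n − k_max + r_E − 1)/2, then E satisfies the partial-inverse condition, i.e., |U_E| ≤ n − k_max and the minimal-degree nonzero solution of the SPI problem deg(E⁽ⁱ⁾(x)Λ(x) mod m(x)) < k⁽ⁱ⁾ + |U_E| (for all i) is Λ_E(x) = Π_{ℓ∈U_E}(x − β_ℓ) up to a scalar. -/
/-!
The error locator `Λ_E = nodal U β` solves the SPI problem because every `E⁽ⁱ⁾ Λ_E` vanishes at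
all nodes. Conversely, let `Λ` be a solution that does not vanish at some `β_ℓ₀` with `ℓ₀ ∈ U`,
and let `Z ⊆ U` be the nodes of `U` where it does vanish. The residues
`h_c = (∑ cᵢ E⁽ⁱ⁾) Λ mod m` vanish on `Uᶜ ∪ Z`, so they are multiples of `nodal (Uᶜ ∪ Z) β` of
bounded degree and span a space of dimension at most `r_E - 1 - |Z|`; that space is nonzero since
`h_c(β_ℓ₀) = (cE)_ℓ₀ Λ(β_ℓ₀)`, so `|Z| < r_E`. On the other hand `c ↦ (h_c, (cE)|_Z)` has kernel
inside the left kernel of `E`, whence `r_E ≤ (r_E - 1 - |Z|) + |Z|`, a contradiction. So every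
solution is divisible by `Λ_E`, which gives both minimality and uniqueness up to scalars.
-/

open Polynomial Lagrange Finset Module LinearMap
open scoped Matrix

section LinearAlgebra

variable {K V W W' W'' : Type*} [Field K] [AddCommGroup V] [Module K V] [FiniteDimensional K V]
  [AddCommGroup W] [Module K W] [AddCommGroup W'] [Module K W'] [AddCommGroup W''] [Module K W'']

theorem LinearMap.finrank_range_le_of_ker_le {f : V →ₗ[K] W} {g : V →ₗ[K] W'}
    (h : ker f ≤ ker g) : finrank K (range g) ≤ finrank K (range f) := by
  have := f.finrank_range_add_finrank_ker
  have := g.finrank_range_add_finrank_ker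
  have := Submodule.finrank_mono h
  omega

theorem LinearMap.finrank_range_le_add_of_ker_inf_le {f : V →ₗ[K] W} {g : V →ₗ[K] W'}
    {M : V →ₗ[K] W''} (h : ker f ⊓ ker g ≤ ker M) :
    finrank K (range M) ≤ finrank K (range f) + finrank K (range g) :=
  calc finrank K (range M) ≤ finrank K (range (f.rangeRestrict.prod g.rangeRestrict)) :=
        finrank_range_le_of_ker_le (by rwa [ker_prod, ker_rangeRestrict, ker_rangeRestrict])
    _ ≤ finrank K (range f × range g) := Submodule.finrank_le _
    _ = _ := Module.finrank_prod

end LinearAlgebra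

theorem LinearMap.finrank_range_funLeft_comp_le {K V ι : Type*} [Field K] [AddCommGroup V]
    [Module K V] (s : Finset ι) (f : V →ₗ[K] ι → K) :
    finrank K (range (funLeft K K ((↑) : s → ι) ∘ₗ f)) ≤ #s :=
  (Submodule.finrank_le _).trans (by simp)

namespace Matrix

variable {K ι κ : Type*} [Field K] [Fintype κ]

theorem rank_eq_finrank_range_vecMulLinear [Fintype ι] (E : Matrix κ ι K) :
    E.rank = finrank K (range E.vecMulLinear) := by
  rw [← E.rank_transpose, rank, mulVecLin_transpose]

theorem vecMul_apply_eq_zero_of_col_eq_zero {E : Matrix κ ι K} {j : ι} (h : ∀ i, E i j = 0)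
    (c : κ → K) : (c ᵥ* E) j = 0 := by
  simp [vecMul, dotProduct, h]

theorem rank_le_card_of_col_eq_zero [Fintype ι] {E : Matrix κ ι K} (s : Finset ι)
    (h : ∀ j ∉ s, ∀ i, E i j = 0) : E.rank ≤ #s := by
  rw [rank_eq_finrank_range_vecMulLinear]
  refine (finrank_range_le_of_ker_le fun c hc => ?_).trans
    (finrank_range_funLeft_comp_le s E.vecMulLinear)
  ext j
  by_cases hj : j ∈ s
  · exact congrFun hc ⟨j, hj⟩
  · exact vecMul_apply_eq_zero_of_col_eq_zero (h j hj) c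

end Matrix

namespace Lagrange

variable {F ι : Type*} [Field F] {s : Finset ι} {v : ι → F}

theorem nodal_dvd_of_eval_eq_zero {p : F[X]} (hvs : Set.InjOn v s)
    (h : ∀ i ∈ s, p.eval (v i) = 0) : nodal s v ∣ p :=
  Finset.prod_dvd_of_coprime
    (fun _ hi _ hj hij => isCoprime_X_sub_C_of_isUnit_sub
      (sub_ne_zero.mpr fun e => hij (hvs hi hj e)).isUnit)
    fun i hi => dvd_iff_isRoot.mpr (h i hi)

theorem eval_modByMonic_nodal (p : F[X]) {i : ι} (hi : i ∈ s) :
    (p %ₘ nodal s v).eval (v i) = p.eval (v i) :=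
  eval₂_modByMonic_eq_self_of_root (eval_nodal_at_node hi)

end Lagrange

namespace Polynomial

theorem mem_map_mulLeft_degreeLT {R : Type*} [CommRing R] [NoZeroDivisors R] {g p : R[X]}
    {d : ℕ} (hgp : g ∣ p) (hp : p.degree < (g.natDegree + d : ℕ)) :
    p ∈ (degreeLT R d).map (LinearMap.mulLeft R g) := by
  obtain ⟨q, rfl⟩ := hgp
  rcases eq_or_ne g 0 with rfl | hg
  · simp
  refine ⟨q, mem_degreeLT.mpr ?_, rfl⟩
  rcases eq_or_ne q 0 with rfl | hq
  · simp
  rw [degree_mul, degree_eq_natDegree hg, degree_eq_natDegree hq] at hp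
  have : g.natDegree + q.natDegree < g.natDegree + d := by exact_mod_cast hp
  rw [degree_eq_natDegree hq]
  exact_mod_cast (by omega : q.natDegree < d)

theorem finrank_map_mulLeft_degreeLT_le {K : Type*} [Field K] (g : K[X]) (d : ℕ) :
    finrank K ((degreeLT K d).map (LinearMap.mulLeft K g)) ≤ d := by
  have : Module.Finite K (degreeLT K d) := Module.Finite.equiv (degreeLTEquiv K d).symm
  refine (Submodule.finrank_map_le _ _).trans ?_
  rw [(degreeLTEquiv K d).finrank_eq]
  simp

end Polynomial

section SPI

variable {F ι κ : Type*} [Field F]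

def IsSPISolution (m : F[X]) (b : κ → F[X]) (ν : κ → ℕ) (Λ : F[X]) : Prop :=
  ∀ i, (b i * Λ % m).degree < ν i

variable [Fintype κ]

noncomputable def spiResidue (m Λ : F[X]) (b : κ → F[X]) : (κ → F) →ₗ[F] F[X] :=
  modByMonicHom m ∘ₗ LinearMap.mulRight F Λ ∘ₗ Fintype.linearCombination F b

theorem spiResidue_single [DecidableEq κ] (m Λ : F[X]) (b : κ → F[X]) (i : κ) :
    spiResidue m Λ b (Pi.single i 1) = b i * Λ %ₘ m := by
  simp [spiResidue, Fintype.linearCombination_apply_single]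

theorem range_spiResidue_le {m Λ : F[X]} {b : κ → F[X]} {Q : Submodule F F[X]}
    (h : ∀ i, b i * Λ %ₘ m ∈ Q) : range (spiResidue m Λ b) ≤ Q := by
  rintro _ ⟨c, rfl⟩
  simp only [spiResidue, coe_comp, Function.comp_apply, Fintype.linearCombination_apply,
    map_sum, map_smul]
  exact Q.sum_mem fun i _ => Q.smul_mem _ (h i)

variable [Fintype ι] {β : ι → F} {E : Matrix κ ι F} {b : κ → F[X]}

theorem eval_spiResidue_nodal (hb : ∀ i ℓ, (b i).eval (β ℓ) = E i ℓ) (Λ : F[X]) (c : κ → F)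
    (ℓ : ι) : (spiResidue (nodal univ β) Λ b c).eval (β ℓ) = (c ᵥ* E) ℓ * Λ.eval (β ℓ) := by
  simp only [spiResidue, coe_comp, Function.comp_apply, modByMonicHom_apply,
    eval_modByMonic_nodal _ (mem_univ ℓ), mulRight_apply, eval_mul,
    Fintype.linearCombination_apply, eval_finsetSum, eval_smul, hb, smul_eq_mul]
  rfl

theorem nodal_dvd_spiResidue (hβ : Function.Injective β) (hb : ∀ i ℓ, (b i).eval (β ℓ) = E i ℓ)
    {Λ : F[X]} {G : Finset ι} (hG : ∀ ℓ ∈ G, (∀ i, E i ℓ = 0) ∨ Λ.eval (β ℓ) = 0)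
    (c : κ → F) : nodal G β ∣ spiResidue (nodal univ β) Λ b c := by
  refine nodal_dvd_of_eval_eq_zero hβ.injOn fun ℓ hℓ => ?_
  rw [eval_spiResidue_nodal hb]
  rcases hG ℓ hℓ with hcol | hroot
  · rw [Matrix.vecMul_apply_eq_zero_of_col_eq_zero hcol, zero_mul]
  · rw [hroot, mul_zero]

theorem ker_spiResidue_inf_le (hb : ∀ i ℓ, (b i).eval (β ℓ) = E i ℓ) {Λ : F[X]} {Z : Finset ι}
    (hZ : ∀ ℓ ∉ Z, Λ.eval (β ℓ) = 0 → ∀ i, E i ℓ = 0) :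
    ker (spiResidue (nodal univ β) Λ b) ⊓ ker (funLeft F F ((↑) : Z → ι) ∘ₗ E.vecMulLinear) ≤
      ker E.vecMulLinear := by
  rintro c ⟨hc, hcZ⟩
  ext ℓ
  by_cases hℓZ : ℓ ∈ Z
  · exact congrFun hcZ ⟨ℓ, hℓZ⟩
  by_cases hroot : Λ.eval (β ℓ) = 0
  · exact Matrix.vecMul_apply_eq_zero_of_col_eq_zero (hZ ℓ hℓZ hroot) c
  have h := eval_spiResidue_nodal hb Λ c ℓ
  rw [show spiResidue _ Λ b c = 0 from hc, eval_zero, eq_comm, mul_eq_zero] at h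
  exact h.resolve_right hroot

theorem finrank_range_spiResidue_pos (hb : ∀ i ℓ, (b i).eval (β ℓ) = E i ℓ) {Λ : F[X]} {i : κ}
    {ℓ : ι} (hE : E i ℓ ≠ 0) (hΛ : Λ.eval (β ℓ) ≠ 0) :
    0 < finrank F (range (spiResidue (nodal univ β) Λ b)) := by
  classical
  refine Nat.pos_of_ne_zero fun h0 => ?_
  have hi : spiResidue (nodal univ β) Λ b (Pi.single i 1) = 0 := by
    simpa using (Submodule.finrank_eq_zero.mp h0).le (mem_range_self _ (Pi.single i 1))
  have h := eval_spiResidue_nodal hb Λ (Pi.single i 1) ℓ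
  rw [hi, eval_zero, Matrix.single_one_vecMul, Matrix.row_apply] at h
  exact mul_ne_zero hE hΛ h.symm

end SPI

section ErrorLocator

variable {F ι κ : Type*} [Field F] [Fintype ι] {β : ι → F} {E : Matrix κ ι F} {b : κ → F[X]}
  {U : Finset ι}

theorem isSPISolution_nodal (hβ : Function.Injective β) (hb : ∀ i ℓ, (b i).eval (β ℓ) = E i ℓ)
    (hcol : ∀ ℓ ∉ U, ∀ i, E i ℓ = 0) (ν : κ → ℕ) :
    IsSPISolution (nodal univ β) b ν (nodal U β) := by
  intro i
  have : nodal univ β ∣ b i * nodal U β := nodal_dvd_of_eval_eq_zero hβ.injOn fun ℓ _ => by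
    by_cases hℓ : ℓ ∈ U
    · rw [eval_mul, eval_nodal_at_node hℓ, mul_zero]
    · rw [eval_mul, hb, hcol ℓ hℓ i, zero_mul]
  rw [EuclideanDomain.mod_eq_zero.mpr this, degree_zero]
  exact WithBot.bot_lt_coe _

theorem nodal_dvd_of_isSPISolution [Fintype κ] (hβ : Function.Injective β)
    (hb : ∀ i ℓ, (b i).eval (β ℓ) = E i ℓ) (hU : ∀ ℓ, ℓ ∈ U ↔ ∃ i, E i ℓ ≠ 0)
    {ν : κ → ℕ} (hν : ∀ i, ν i + #U < Fintype.card ι + E.rank) {Λ : F[X]}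
    (hΛ : IsSPISolution (nodal univ β) b ν Λ) : nodal U β ∣ Λ := by
  classical
  refine nodal_dvd_of_eval_eq_zero hβ.injOn fun ℓ₀ hℓ₀U => by_contra fun hℓ₀ => ?_
  have hcol : ∀ ℓ ∉ U, ∀ i, E i ℓ = 0 := fun ℓ hℓ i =>
    not_not.mp fun h => hℓ ((hU ℓ).mpr ⟨i, h⟩)
  set Z := U.filter fun ℓ => Λ.eval (β ℓ) = 0
  have hZU : #Z ≤ #U := card_filter_le _ _
  have hG : #(Uᶜ ∪ Z) = Fintype.card ι - #U + #Z := by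
    rw [card_union_of_disjoint (filter_subset _ U).disjoint_compl_right.symm, card_compl]
  have hrange : range (spiResidue (nodal univ β) Λ b) ≤
      (degreeLT F (E.rank - 1 - #Z)).map (mulLeft F (nodal (Uᶜ ∪ Z) β)) := by
    refine range_spiResidue_le fun i => mem_map_mulLeft_degreeLT ?_ ?_
    · rw [← spiResidue_single]
      refine nodal_dvd_spiResidue hβ hb (fun ℓ hℓ => ?_) _
      rcases mem_union.mp hℓ with hℓ | hℓ
      exacts [.inl (hcol ℓ (mem_compl.mp hℓ)), .inr (mem_filter.mp hℓ).2]
    · rw [modByMonic_eq_mod _ nodal_monic, natDegree_nodal, hG]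
      refine (hΛ i).trans_le ?_
      have := hν i
      have := U.card_le_univ
      exact_mod_cast (by omega : ν i ≤ Fintype.card ι - #U + #Z + (E.rank - 1 - #Z))
  obtain ⟨i, hi⟩ := (hU ℓ₀).mp hℓ₀U
  have hpos := finrank_range_spiResidue_pos hb hi hℓ₀
  have hker := finrank_range_le_add_of_ker_inf_le (ker_spiResidue_inf_le hb (Z := Z)
    fun ℓ hℓZ hroot => hcol ℓ fun hℓU => hℓZ (mem_filter.mpr ⟨hℓU, hroot⟩))
  have := (Submodule.finrank_mono hrange).trans (finrank_map_mulLeft_degreeLT_le _ _)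
  have := finrank_range_funLeft_comp_le Z E.vecMulLinear
  rw [← E.rank_eq_finrank_range_vecMulLinear] at hker
  omega

end ErrorLocator

theorem partialInverse_condition_of_rank_bound_general {F : Type*} [Field F] {L n : ℕ}
    (β : Fin n → F) (hβ : Function.Injective β)
    (E : Matrix (Fin L) (Fin n) F)
    (Epoly : Fin L → F[X])
    (hEval : ∀ i ℓ, (Epoly i).eval (β ℓ) = E i ℓ)
    (U : Finset (Fin n))
    (hU : ∀ ℓ, ℓ ∈ U ↔ ∃ i, E i ℓ ≠ 0)
    (k : Fin L → ℕ)
    (hrank : 2 * U.card + 1 ≤ n - Finset.univ.sup k + E.rank) :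
    U.card ≤ n - Finset.univ.sup k ∧
    (∀ i, ((Epoly i) * (∏ ℓ ∈ U, (X - C (β ℓ))) % (∏ ℓ, (X - C (β ℓ)))).degree <
      ((k i + U.card : ℕ) : WithBot ℕ)) ∧
    (∀ Λ : F[X], Λ ≠ 0 →
      (∀ i, ((Epoly i) * Λ % (∏ ℓ, (X - C (β ℓ)))).degree <
        ((k i + U.card : ℕ) : WithBot ℕ)) →
      (∏ ℓ ∈ U, (X - C (β ℓ))).degree ≤ Λ.degree) ∧
    (∀ Λ : F[X], Λ ≠ 0 →
      (∀ i, ((Epoly i) * Λ % (∏ ℓ, (X - C (β ℓ)))).degree <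
        ((k i + U.card : ℕ) : WithBot ℕ)) →
      (∀ g : F[X], g ≠ 0 →
        (∀ i, ((Epoly i) * g % (∏ ℓ, (X - C (β ℓ)))).degree <
          ((k i + U.card : ℕ) : WithBot ℕ)) → Λ.degree ≤ g.degree) →
      ∃ cst : F, cst ≠ 0 ∧ Λ = cst • (∏ ℓ ∈ U, (X - C (β ℓ)))) := by
  have hcol : ∀ ℓ ∉ U, ∀ i, E i ℓ = 0 := fun ℓ hℓ i =>
    not_not.mp fun h => hℓ ((hU ℓ).mpr ⟨i, h⟩)
  have hrU : E.rank ≤ #U := E.rank_le_card_of_col_eq_zero U hcol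
  have hν : ∀ i, k i + #U + #U < Fintype.card (Fin n) + E.rank := fun i => by
    have := le_sup (f := k) (mem_univ i)
    rw [Fintype.card_fin]
    omega
  have hsol := isSPISolution_nodal hβ hEval hcol fun i => k i + #U
  have hdvd := fun Λ (hΛ : IsSPISolution _ _ _ Λ) => nodal_dvd_of_isSPISolution hβ hEval hU hν hΛ
  refine ⟨by omega, hsol, fun Λ hΛ h => degree_le_of_dvd (hdvd Λ h) hΛ,
    fun Λ hΛ h hmin => ⟨Λ.leadingCoeff, leadingCoeff_ne_zero.mpr hΛ, ?_⟩⟩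
  rw [smul_eq_C_mul]
  exact eq_leadingCoeff_mul_of_monic_of_dvd_of_natDegree_le nodal_monic (hdvd Λ h)
    (natDegree_le_natDegree (hmin _ nodal_ne_zero hsol))

/-- If `|U_E| ≤ (n − k_max + rank E − 1)/2` (i.e. `2|U_E| + 1 ≤ n − k_max + rank E`),
then `E` satisfies the partial-inverse condition: `|U_E| ≤ n − k_max`, the error
locator `Λ_E = ∏_{ℓ∈U_E}(x − β_ℓ)` satisfies and is minimal for the SPI problem
`deg(E⁽ⁱ⁾ Λ mod m) < k⁽ⁱ⁾ + |U_E|` (all `i`), and every minimal-degree nonzero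
solution is a nonzero scalar multiple of `Λ_E`. -/
theorem partialInverse_condition_of_rank_bound {F : Type*} [Field F] {L n : ℕ}
    (β : Fin n → F) (hβ : Function.Injective β)
    (E : Matrix (Fin L) (Fin n) F)
    (Epoly : Fin L → F[X])
    (hEdeg : ∀ i, (Epoly i).degree < (n : WithBot ℕ))
    (hEval : ∀ i ℓ, (Epoly i).eval (β ℓ) = E i ℓ)
    (U : Finset (Fin n))
    (hU : ∀ ℓ, ℓ ∈ U ↔ ∃ i, E i ℓ ≠ 0)
    (k : Fin L → ℕ) (hkn : ∀ i, k i < n)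
    (hrank : 2 * U.card + 1 ≤ n - Finset.univ.sup k + E.rank) :
    U.card ≤ n - Finset.univ.sup k ∧
    (∀ i, ((Epoly i) * (∏ ℓ ∈ U, (X - C (β ℓ))) % (∏ ℓ, (X - C (β ℓ)))).degree <
      ((k i + U.card : ℕ) : WithBot ℕ)) ∧
    (∀ Λ : F[X], Λ ≠ 0 →
      (∀ i, ((Epoly i) * Λ % (∏ ℓ, (X - C (β ℓ)))).degree <
        ((k i + U.card : ℕ) : WithBot ℕ)) →
      (∏ ℓ ∈ U, (X - C (β ℓ))).degree ≤ Λ.degree) ∧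
    (∀ Λ : F[X], Λ ≠ 0 →
      (∀ i, ((Epoly i) * Λ % (∏ ℓ, (X - C (β ℓ)))).degree <
        ((k i + U.card : ℕ) : WithBot ℕ)) →
      (∀ g : F[X], g ≠ 0 →
        (∀ i, ((Epoly i) * g % (∏ ℓ, (X - C (β ℓ)))).degree <
          ((k i + U.card : ℕ) : WithBot ℕ)) → Λ.degree ≤ g.degree) →
      ∃ cst : F, cst ≠ 0 ∧ Λ = cst • (∏ ℓ ∈ U, (X - C (β ℓ)))) :=
  partialInverse_condition_of_rank_bound_general β hβ E Epoly hEval U hU k hrank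
end

section
/- Counting monic polynomials by number of zeros in a prescribed set: let U be a set of t' = |U| distinct elements of a finite field F with |F| = q. The number of monic polynomials Λ(x) ∈ F[x] with deg Λ(x) < |U| having exactly t zeros in U (counted as distinct roots, 0 ≤ t ≤ |U| − 1) is C(|U|, t)·(q−1)^{|U|−t−1}. -/
open Polynomial Finset

/-!
Evaluation at the points of `U` identifies the polynomials of degree `< |U|` with the functions
`U → F` (Lagrange interpolation), and a function with exactly `t` zeros is a choice of its zero
set together with a nowhere-zero function on the complement: `C(|U|, t) (q - 1)^(|U| - t)` of
them. As `t < |U|` none of these polynomials is `0`, so each is uniquely a monic one of the same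
kind times a unit of `F`, and dividing by `q - 1` counts the monic ones.
-/

section ZeroCount

variable {α M : Type*} [Fintype α] [DecidableEq α] [Fintype M] [DecidableEq M] [Zero M]

lemma filter_zeros_eq_piFinset (S : Finset α) :
    univ.filter (fun f : α → M => univ.filter (f · = 0) = S) =
      Fintype.piFinset fun i => if i ∈ S then {0} else univ.erase 0 := by
  ext f
  simp only [Finset.ext_iff, mem_filter, mem_univ, true_and, Fintype.mem_piFinset]
  refine forall_congr' fun i => ?_
  by_cases hi : i ∈ S <;> simp [hi]

lemma card_filter_zeros_eq (S : Finset α) :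
    #(univ.filter fun f : α → M => univ.filter (f · = 0) = S) =
      (Fintype.card M - 1) ^ (Fintype.card α - #S) := by
  rw [filter_zeros_eq_piFinset, Fintype.card_piFinset]
  simp only [apply_ite card, card_singleton, card_erase_of_mem (mem_univ _), card_univ]
  rw [prod_ite, filter_not, prod_const_one, one_mul, prod_const, ← compl_eq_univ_sdiff,
    card_compl, filter_mem_eq_inter, univ_inter]

lemma card_filter_card_zeros_eq (t : ℕ) :
    #(univ.filter fun f : α → M => #(univ.filter (f · = 0)) = t) =
      (Fintype.card α).choose t * (Fintype.card M - 1) ^ (Fintype.card α - t) := by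
  rw [card_eq_sum_card_fiberwise (f := fun f : α → M => univ.filter (f · = 0))
    (t := univ.powersetCard t) fun f hf => by simpa using hf]
  have fiber (S) (hS : S ∈ univ.powersetCard t) :
      #{f ∈ univ.filter fun f : α → M => #(univ.filter (f · = 0)) = t |
        univ.filter (f · = 0) = S} = (Fintype.card M - 1) ^ (Fintype.card α - t) := by
    obtain ⟨-, hcard⟩ := mem_powersetCard.1 hS
    rw [filter_filter, ← hcard, ← card_filter_zeros_eq S]
    exact congrArg card <| filter_congr fun f _ => ⟨And.right, fun h => ⟨by rw [h], h⟩⟩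
  rw [sum_congr rfl fiber, sum_const, card_powersetCard, card_univ, smul_eq_mul]

end ZeroCount

section Field

variable {F : Type*} [Field F]

noncomputable def monicProdUnitsEquiv (p : F[X] → Prop) (hp0 : ¬ p 0)
    (hp : ∀ (c : Fˣ) (Λ : F[X]), p (c • Λ) ↔ p Λ) :
    {Λ : F[X] // Λ.Monic ∧ p Λ} × Fˣ ≃ {Λ : F[X] // p Λ} where
  toFun x := ⟨x.2 • x.1.1, (hp _ _).2 x.1.2.2⟩
  invFun Λ :=
    have hΛ : Λ.1 ≠ 0 := fun h => hp0 (h ▸ Λ.2)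
    (⟨(Units.mk0 _ (leadingCoeff_ne_zero.2 hΛ))⁻¹ • Λ.1, by
        simpa [Units.smul_def, smul_eq_C_mul] using monic_C_mul_of_mul_leadingCoeff_eq_one
          (inv_mul_cancel₀ (leadingCoeff_ne_zero.2 hΛ)), (hp _ _).2 Λ.2⟩,
      Units.mk0 _ (leadingCoeff_ne_zero.2 hΛ))
  left_inv := by
    rintro ⟨⟨Λ, hmonic, hΛ⟩, c⟩
    have hlc : (c • Λ).leadingCoeff = c := by
      simp [Units.smul_def, smul_eq_C_mul, hmonic.leadingCoeff]
    ext <;> simp [hlc]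
  right_inv := by
    rintro ⟨Λ, hΛ⟩
    ext1
    simp

lemma card_degree_lt_zeros_eq_card_fun_zeros [DecidableEq F] (U : Finset F) (t : ℕ) :
    Nat.card {Λ : F[X] // Λ.degree < (#U : WithBot ℕ) ∧ #(U.filter fun β => Λ.eval β = 0) = t} =
      Nat.card {f : U → F // #(univ.filter (f · = 0)) = t} := by
  let e := (Lagrange.funEquivDegreeLT (F := F) (s := U) (v := id) (Set.injOn_id _)).toEquiv
  refine Nat.card_congr <| (Equiv.subtypeEquivRight fun Λ => by rw [← mem_degreeLT]).trans <|
    (Equiv.subtypeSubtypeEquivSubtypeInter (· ∈ degreeLT F #U) _).symm.trans <|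
    e.subtypeEquiv fun Λ => ?_
  suffices #(univ.filter fun β : U => Λ.1.eval β.1 = 0) = #(U.filter fun β => Λ.1.eval β = 0) by
    rw [← this]; rfl
  rw [univ_eq_attach, filter_attach (fun β => Λ.1.eval β = 0), card_map, card_attach]

end Field

/-- Counting monic polynomials by number of zeros in a prescribed set: for a set
`U` of distinct elements of a finite field `F` with `|F| = q` and `0 ≤ t ≤ |U|−1`,
the number of monic polynomials `Λ` with `deg Λ < |U|` having exactly `t` zeros in
`U` equals `C(|U|, t)·(q−1)^{|U|−t−1}`. -/
theorem card_monic_poly_with_t_zeros (F : Type*) [Field F] [Fintype F] [DecidableEq F]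
    (U : Finset F) (t : ℕ) (ht : t + 1 ≤ U.card) :
    Nat.card {Λ : F[X] // Λ.Monic ∧ Λ.degree < (U.card : WithBot ℕ) ∧
        (U.filter (fun β => Λ.eval β = 0)).card = t} =
      Nat.choose U.card t * (Fintype.card F - 1) ^ (U.card - t - 1) := by
  let p : F[X] → Prop := fun Λ =>
    Λ.degree < (U.card : WithBot ℕ) ∧ (U.filter (fun β => Λ.eval β = 0)).card = t
  have hp0 : ¬ p 0 := fun ⟨_, h⟩ => by
    rw [filter_true_of_mem fun β _ => eval_zero] at h
    omega
  have hp (c : Fˣ) (Λ : F[X]) : p (c • Λ) ↔ p Λ := by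
    simp [p, Units.smul_def, smul_eq_C_mul, degree_C_mul c.ne_zero]
  have hcount : Nat.card {Λ // p Λ} = U.card.choose t * (Fintype.card F - 1) ^ (U.card - t) := by
    rw [card_degree_lt_zeros_eq_card_fun_zeros, Nat.card_eq_fintype_card, Fintype.card_subtype,
      card_filter_card_zeros_eq, Fintype.card_coe]
  have hunits : Nat.card Fˣ = Fintype.card F - 1 := by
    rw [Nat.card_eq_fintype_card, Fintype.card_units]
  have hsplit := Nat.card_congr (monicProdUnitsEquiv p hp0 hp)
  rw [Nat.card_prod, hunits, hcount] at hsplit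
  have hq : 0 < Fintype.card F - 1 := by have := Fintype.one_lt_card (α := F); omega
  apply Nat.eq_of_mul_eq_mul_right hq
  rw [hsplit, mul_assoc, ← pow_succ, Nat.sub_add_cancel (by omega)]
end

section
/- Necessity of the radius bound: if the error pattern E satisfies the partial-inverse condition (i.e., |U_E| ≤ n − k_max and Λ_E(x) is the minimal-degree nonzero solution of deg(E⁽ⁱ⁾(x)Λ(x) mod m(x)) < k⁽ⁱ⁾ + |U_E| for all i), then |U_E| ≤ (L/(L+1))·(n − k_avg), where k_avg = (1/L)Σᵢ k⁽ⁱ⁾. -/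
open Polynomial

/-- Necessity of the radius bound: if the error pattern satisfies the
partial-inverse condition (`|U_E| ≤ n − k_max` and `Λ_E = ∏_{ℓ∈U_E}(x − β_ℓ)` is a
minimal-degree nonzero solution of `deg(E⁽ⁱ⁾ Λ mod m) < k⁽ⁱ⁾ + |U_E|` for all `i`),
then `|U_E| ≤ (L/(L+1))·(n − k_avg)`, i.e. `(L+1)·|U_E| + ∑ᵢ k⁽ⁱ⁾ ≤ L·n`. -/
theorem partialInverse_condition_radius_necessary {F : Type*} [Field F] {L n : ℕ}
    (hL : 0 < L)
    (β : Fin n → F) (hβ : Function.Injective β)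
    (E : Fin L → F[X])
    (hEdeg : ∀ i, (E i).degree < (n : WithBot ℕ))
    (U : Finset (Fin n))
    (hU : ∀ ℓ, ℓ ∈ U ↔ ∃ i, (E i).eval (β ℓ) ≠ 0)
    (k : Fin L → ℕ) (hkn : ∀ i, k i < n)
    (hcard : U.card ≤ n - Finset.univ.sup k)
    (hsat : ∀ i, ((E i) * (∏ ℓ ∈ U, (X - C (β ℓ))) % (∏ ℓ, (X - C (β ℓ)))).degree <
      ((k i + U.card : ℕ) : WithBot ℕ))
    (hmin : ∀ g : F[X], g ≠ 0 →
      (∀ i, ((E i) * g % (∏ ℓ, (X - C (β ℓ)))).degree < ((k i + U.card : ℕ) : WithBot ℕ)) →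
      (∏ ℓ ∈ U, (X - C (β ℓ))).degree ≤ g.degree) :
    (L + 1) * U.card + ∑ i, k i ≤ L * n := by
  classical
  set m : F[X] := ∏ ℓ, (X - C (β ℓ)) with hm_def
  have hmmonic : m.Monic := monic_prod_of_monic _ _ fun ℓ _ => monic_X_sub_C _
  have hmdeg : m.natDegree = n := by
    rw [hm_def, natDegree_prod_of_monic _ _ fun ℓ _ => monic_X_sub_C _]
    simp
  have hmdeg' : m.degree = (n : WithBot ℕ) := by
    rw [degree_eq_natDegree hmmonic.ne_zero, hmdeg]
  set Λ : F[X] := ∏ ℓ ∈ U, (X - C (β ℓ)) with hΛ_def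
  have hΛmonic : Λ.Monic := monic_prod_of_monic _ _ fun ℓ _ => monic_X_sub_C _
  have hΛdeg : Λ.degree = (U.card : WithBot ℕ) := by
    rw [degree_eq_natDegree hΛmonic.ne_zero, hΛ_def,
      natDegree_prod_of_monic _ _ fun ℓ _ => monic_X_sub_C _]
    simp
  have hkU : ∀ i, k i + U.card ≤ n := by
    intro i
    have h1 : k i ≤ Finset.univ.sup k := Finset.le_sup (Finset.mem_univ i)
    have h2 := hkn i
    omega
  -- The linear "syndrome" map
  let φ : (Fin U.card → F) →ₗ[F] (∀ i : Fin L, Fin (n - (k i + U.card)) → F) :=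
  { toFun := fun v i j =>
      ((E i * ((degreeLTEquiv F U.card).symm v : F[X])) %ₘ m).coeff (k i + U.card + j)
    map_add' := by
      intro a b
      funext i j
      simp [mul_add, Polynomial.add_modByMonic]
    map_smul' := by
      intro c a
      funext i j
      simp [mul_smul_comm, Polynomial.smul_modByMonic] }
  have hker : ∀ v, φ v = 0 → v = 0 := by
    intro v hv
    by_contra hv0
    set g : F[X] := ((degreeLTEquiv F U.card).symm v : F[X]) with hg_def
    have hgmem : g ∈ degreeLT F U.card := ((degreeLTEquiv F U.card).symm v).2
    have hgdeg : g.degree < (U.card : WithBot ℕ) := mem_degreeLT.1 hgmem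
    have hgne : g ≠ 0 := by
      intro h
      apply hv0
      have h0 : (degreeLTEquiv F U.card).symm v = 0 := Subtype.ext h
      have := congrArg (degreeLTEquiv F U.card) h0
      simpa using this
    have hdegs : ∀ i, ((E i) * g % m).degree < ((k i + U.card : ℕ) : WithBot ℕ) := by
      intro i
      rw [← modByMonic_eq_mod _ hmmonic]
      rw [degree_lt_iff_coeff_zero]
      intro t ht
      by_cases htn : t < n
      · have hj : t - (k i + U.card) < n - (k i + U.card) := by omega
        have := congrFun (congrFun hv i) ⟨t - (k i + U.card), hj⟩
        simpa [φ, show k i + U.card + (t - (k i + U.card)) = t by omega, ← hg_def] using this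
      · apply coeff_eq_zero_of_degree_lt
        calc ((E i * g) %ₘ m).degree < m.degree := degree_modByMonic_lt _ hmmonic
          _ ≤ (t : WithBot ℕ) := by rw [hmdeg']; exact_mod_cast Nat.cast_le.2 (by omega)
    have hle := hmin g hgne hdegs
    rw [hΛdeg] at hle
    exact absurd hgdeg (not_lt.2 hle)
  have hinj : Function.Injective φ := by
    rw [← LinearMap.ker_eq_bot]
    exact LinearMap.ker_eq_bot'.2 hker
  have hfr := LinearMap.finrank_le_finrank_of_injective hinj
  rw [Module.finrank_fin_fun, Module.finrank_pi_fintype] at hfr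
  simp only [Module.finrank_fin_fun] at hfr
  have hsum : ∑ i, (n - (k i + U.card)) + ∑ i : Fin L, (k i + U.card) = L * n := by
    rw [← Finset.sum_add_distrib]
    have : ∀ i ∈ Finset.univ, (n - (k i + U.card)) + (k i + U.card) = n := by
      intro i _; have := hkU i; omega
    rw [Finset.sum_congr rfl this]
    simp [mul_comm]
  have h2 : ∑ i : Fin L, (k i + U.card) = ∑ i, k i + L * U.card := by
    rw [Finset.sum_add_distrib]
    simp [mul_comm]
  rw [h2] at hsum
  have hgoal : (L + 1) * U.card = L * U.card + U.card := by ring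
  rw [hgoal]
  omega
end
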